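/- arXiv:2503.15165 — 3 statements merged into one kernel-verified Lean document; each statement's English description precedes it below -/
import Mathlib

section
/- Let Γ = (V,E) be a graph with vertex groups G_v and H_v for each v ∈ V, and suppose for each v there is a bijection f_v : G_v → H_v with f_v(e) = e. Then there is a bijection f : G_Γ → H_Γ between the graph products such that for every reduced word (g_1,…,g_k) representing an element of G_Γ with g_i ∈ G_{v_i}, the word (f_{v_1}(g_1),…,f_{v_k}(g_k)) is a reduced word in H_Γ representing f(g_1⋯g_k). -/
/-- The Cayley graph of a group `G` with respect to a set `S`:
vertices are elements of `G`, and `g` is adjacent to `g * s` for `s ∈ S`. -/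
def cayley (G : Type*) [Group G] (S : Set G) : SimpleGraph G :=
  SimpleGraph.fromRel (fun g h => g⁻¹ * h ∈ S)

/-- The normal closure of the commutators coming from edges of `Γ`. -/
def graphProductRels {V : Type*} (Γ : SimpleGraph V) (G : V → Type*) [∀ v, Group (G v)] :
    Subgroup (Monoid.CoprodI G) :=
  Subgroup.normalClosure {x | ∃ (u v : V) (a : G u) (b : G v), Γ.Adj u v ∧
    x = Monoid.CoprodI.of a * Monoid.CoprodI.of b *
        (Monoid.CoprodI.of a)⁻¹ * (Monoid.CoprodI.of b)⁻¹}

instance {V : Type*} (Γ : SimpleGraph V) (G : V → Type*) [∀ v, Group (G v)] :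
    (graphProductRels Γ G).Normal :=
  Subgroup.normalClosure_normal

/-- The graph product of the groups `G v` over the simplicial graph `Γ`. -/
def GraphProduct {V : Type*} (Γ : SimpleGraph V) (G : V → Type*) [∀ v, Group (G v)] : Type _ :=
  Monoid.CoprodI G ⧸ graphProductRels Γ G

instance {V : Type*} (Γ : SimpleGraph V) (G : V → Type*) [∀ v, Group (G v)] :
    Group (GraphProduct Γ G) :=
  QuotientGroup.Quotient.group _

/-- The canonical map from a vertex group into the graph product. -/
def GraphProduct.of {V : Type*} (Γ : SimpleGraph V) (G : V → Type*) [∀ v, Group (G v)]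
    {v : V} : G v →* GraphProduct Γ G :=
  (QuotientGroup.mk' (graphProductRels Γ G)).comp Monoid.CoprodI.of

/-- The element of the graph product represented by a word (a list of syllables). -/
def wordProd {V : Type*} (Γ : SimpleGraph V) (G : V → Type*) [∀ v, Group (G v)]
    (l : List (Σ v, G v)) : GraphProduct Γ G :=
  (l.map (fun p => GraphProduct.of Γ G p.2)).prod

/-- Syllable shuffling: interchange two consecutive syllables whose vertices are adjacent. -/
inductive Shuffle {V : Type*} (Γ : SimpleGraph V) (G : V → Type*) :
    List (Σ v, G v) → List (Σ v, G v) → Prop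
  | swap (l₁ l₂ : List (Σ v, G v)) {u v : V} (a : G u) (b : G v) (h : Γ.Adj u v) :
      Shuffle Γ G (l₁ ++ ⟨u, a⟩ :: ⟨v, b⟩ :: l₂) (l₁ ++ ⟨v, b⟩ :: ⟨u, a⟩ :: l₂)

/-- A word is reduced if all its syllables are nontrivial and no sequence of syllable
shufflings brings two syllables from the same vertex group next to each other. -/
def Reduced {V : Type*} (Γ : SimpleGraph V) (G : V → Type*) [∀ v, Group (G v)]
    (l : List (Σ v, G v)) : Prop :=
  (∀ p ∈ l, p.2 ≠ 1) ∧
  ∀ l', Relation.ReflTransGen (Shuffle Γ G) l l' → l'.Chain' (fun p q => p.1 ≠ q.1)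

namespace GPAux
set_option linter.unnecessarySimpa false
set_option linter.unusedSectionVars false

open Relation List

variable {V : Type*} {G : V → Type*} [∀ v, Group (G v)] {Γ : SimpleGraph V}

/-- The shuffle-equivalence on words. -/
abbrev Rw (Γ : SimpleGraph V) (G : V → Type*) :
    List (Σ v, G v) → List (Σ v, G v) → Prop :=
  Relation.ReflTransGen (Shuffle Γ G)

theorem shuffle_symm : Symmetric (Shuffle Γ G) := fun _ _ h => by
  rcases h with @⟨l₁, l₂, u, w, a, b, hadj⟩
  exact Shuffle.swap l₁ l₂ b a hadj.symm

theorem rwSymm {l l' : List (Σ v, G v)} (h : Rw Γ G l l') : Rw Γ G l' l :=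
  (@Relation.ReflTransGen.symmetric _ (Shuffle Γ G) ⟨fun _ _ h => shuffle_symm h⟩).symm _ _ h

theorem shuffleCons (p : Σ v, G v) {l l'} (h : Shuffle Γ G l l') :
    Shuffle Γ G (p :: l) (p :: l') := by
  rcases h with @⟨l₁, l₂, u, w, a, b, hadj⟩
  exact Shuffle.swap (p :: l₁) l₂ a b hadj

theorem rwCons (p : Σ v, G v) {l l'} (h : Rw Γ G l l') : Rw Γ G (p :: l) (p :: l') :=
  Relation.ReflTransGen.lift (p :: ·) (fun _ _ hs => shuffleCons p hs) _ _ h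

theorem shufflePerm {l l' : List (Σ v, G v)} (h : Shuffle Γ G l l') : l.Perm l' := by
  rcases h with @⟨l₁, l₂, u, w, a, b, hadj⟩
  exact List.Perm.append_left l₁ (List.Perm.swap _ _ _)

theorem rwPerm {l l' : List (Σ v, G v)} (h : Rw Γ G l l') : l.Perm l' := by
  induction h with
  | refl => exact List.Perm.refl _
  | tail _ hs ih => exact ih.trans (shufflePerm hs)

theorem of_comm {u w : V} (hadj : Γ.Adj u w) (a : G u) (b : G w) :
    GraphProduct.of Γ G a * GraphProduct.of Γ G b
      = GraphProduct.of Γ G b * GraphProduct.of Γ G a := by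
  have hmem : (Monoid.CoprodI.of a * Monoid.CoprodI.of b *
      (Monoid.CoprodI.of a)⁻¹ * (Monoid.CoprodI.of b)⁻¹) ∈ graphProductRels Γ G :=
    Subgroup.subset_normalClosure ⟨u, w, a, b, hadj, rfl⟩
  have h2 : (QuotientGroup.mk' (graphProductRels Γ G)) (Monoid.CoprodI.of a *
      Monoid.CoprodI.of b * (Monoid.CoprodI.of a)⁻¹ * (Monoid.CoprodI.of b)⁻¹) = 1 :=
    by rw [QuotientGroup.mk'_apply]; exact (QuotientGroup.eq_one_iff _).mpr hmem
  set x := GraphProduct.of Γ G a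
  set y := GraphProduct.of Γ G b
  have h3 : x * y * x⁻¹ * y⁻¹ = 1 := by
    rw [map_mul, map_mul, map_mul, map_inv, map_inv] at h2; exact h2
  have h4 : x * y * x⁻¹ = y := by
    have := mul_inv_eq_one.mp h3
    exact this
  calc x * y = (x * y * x⁻¹) * x := by group
  _ = y * x := by rw [h4]

theorem wordProd_cons (p : Σ v, G v) (l) :
    wordProd Γ G (p :: l) = GraphProduct.of Γ G p.2 * wordProd Γ G l := by
  simp [wordProd]

theorem wordProd_nil : wordProd Γ G [] = 1 := rfl

theorem wordProd_shuffle {l l'} (h : Shuffle Γ G l l') :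
    wordProd Γ G l = wordProd Γ G l' := by
  rcases h with @⟨l₁, l₂, u, w, a, b, hadj⟩
  simp only [wordProd, List.map_append, List.prod_append, List.map_cons, List.prod_cons]
  congr 1
  rw [← mul_assoc, ← mul_assoc, of_comm hadj]

theorem wordProd_rw {l l'} (h : Rw Γ G l l') : wordProd Γ G l = wordProd Γ G l' := by
  induction h with
  | refl => rfl
  | tail _ hs ih => exact ih.trans (wordProd_shuffle hs)


open scoped Classical in
/-- Extract the unique syllable at vertex `v` that can be shuffled to the front,
together with the remaining word. -/
noncomputable def frontExtract (Γ : SimpleGraph V) (v : V) :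
    List (Σ v, G v) → Option (G v × List (Σ v, G v))
  | [] => none
  | p :: t =>
    if h : p.1 = v then some (h ▸ p.2, t)
    else if Γ.Adj p.1 v then (frontExtract Γ v t).map (fun q => (q.1, p :: q.2)) else none

variable {v : V}

theorem fe_nil : frontExtract Γ v ([] : List (Σ v, G v)) = none := by
  rw [frontExtract]

theorem fe_cons_eq (p : Σ v, G v) (t) (h : p.1 = v) :
    frontExtract Γ v (p :: t) = some (h ▸ p.2, t) := by
  rw [frontExtract, dif_pos h]

theorem fe_cons_self (a : G v) (t) : frontExtract Γ v (⟨v, a⟩ :: t) = some (a, t) :=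
  fe_cons_eq _ _ rfl

theorem fe_cons_adj (p : Σ v, G v) (t) (h : Γ.Adj p.1 v) :
    frontExtract Γ v (p :: t)
      = (frontExtract Γ v t).map (fun q => (q.1, p :: q.2)) := by
  rw [frontExtract, dif_neg h.ne, if_pos h]

theorem fe_cons_nadj (p : Σ v, G v) (t) (h1 : p.1 ≠ v) (h2 : ¬ Γ.Adj p.1 v) :
    frontExtract Γ v (p :: t) = none := by
  rw [frontExtract, dif_neg h1, if_neg h2]

/-- Structural description of a successful extraction. -/
theorem fe_decomp' :
    ∀ (l : List (Σ v, G v)) {b : G v} {t : List (Σ v, G v)},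
      frontExtract Γ v l = some (b, t) →
      ∃ A B, l = A ++ ⟨v, b⟩ :: B ∧ t = A ++ B ∧ ∀ p ∈ A, Γ.Adj p.1 v := by
  intro l
  induction l with
  | nil => intro b t h; rw [fe_nil] at h; exact absurd h (by simp)
  | cons p r ih =>
    intro b t h
    by_cases h1 : p.1 = v
    · rw [fe_cons_eq p r h1] at h
      obtain ⟨pv, pa⟩ := p
      dsimp at h1; subst h1
      simp only [Option.some.injEq, Prod.mk.injEq] at h
      refine ⟨[], r, ?_, ?_, by simp⟩
      · simp [← h.1]
      · simp [h.2]
    · by_cases h2 : Γ.Adj p.1 v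
      · rw [fe_cons_adj p r h2] at h
        rw [Option.map_eq_some_iff] at h
        obtain ⟨⟨c, s⟩, hcs, hmk⟩ := h
        simp only [Prod.mk.injEq] at hmk
        obtain ⟨rfl, rfl⟩ := hmk
        obtain ⟨A, B, hA, hB, hadjA⟩ := ih hcs
        refine ⟨p :: A, B, by simp [hA], by simp [hB], ?_⟩
        intro q hq
        rcases List.mem_cons.mp hq with rfl | hq'
        · exact h2
        · exact hadjA q hq' 
      · rw [fe_cons_nadj p r h1 h2] at h; exact absurd h (by simp)

theorem fe_prefix {b : G v} :
    ∀ (A : List (Σ v, G v)) {B : List (Σ v, G v)}, (∀ p ∈ A, Γ.Adj p.1 v) →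
      frontExtract Γ v (A ++ ⟨v, b⟩ :: B) = some (b, A ++ B) := by
  intro A
  induction A with
  | nil => intro B _; simpa using fe_cons_self b B
  | cons p A ih =>
    intro B hA
    have hadj : Γ.Adj p.1 v := hA p (by simp)
    rw [cons_append, fe_cons_adj p _ hadj, ih (fun q hq => hA q (by simp [hq]))]
    simp

/-- Index version of `fe_decomp`. -/
theorem fe_some_idx' :
    ∀ (l : List (Σ v, G v)) {b : G v} {t : List (Σ v, G v)},
      frontExtract Γ v l = some (b, t) →
      ∃ i, ∃ hi : i < l.length, l[i] = ⟨v, b⟩ ∧ t = l.eraseIdx i ∧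
        ∀ j (hj : j < i), Γ.Adj (l[j]'(hj.trans hi)).1 v := by
  intro l
  induction l with
  | nil => intro b t h; rw [fe_nil] at h; exact absurd h (by simp)
  | cons p r ih =>
    intro b t h
    by_cases h1 : p.1 = v
    · rw [fe_cons_eq p r h1] at h
      obtain ⟨pv, pa⟩ := p
      dsimp at h1; subst h1
      simp only [Option.some.injEq, Prod.mk.injEq] at h
      refine ⟨0, by simp, by simp [h.1], by simp [h.2], by omega⟩
    · by_cases h2 : Γ.Adj p.1 v
      · rw [fe_cons_adj p r h2, Option.map_eq_some_iff] at h
        obtain ⟨⟨c, s⟩, hcs, hmk⟩ := h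
        simp only [Prod.mk.injEq] at hmk
        obtain ⟨rfl, rfl⟩ := hmk
        obtain ⟨i, hi, hget, hs, hadj⟩ := ih hcs
        refine ⟨i + 1, by simpa using hi, by simpa using hget, by simp [hs], ?_⟩
        intro j hj
        rcases j with _ | j
        · simpa using h2
        · simpa using hadj j (by omega)
      · rw [fe_cons_nadj p r h1 h2] at h; exact absurd h (by simp)

theorem fe_ne_none (i : ℕ) :
    ∀ {l : List (Σ v, G v)} (hi : i < l.length), (l[i]).1 = v →
      (∀ j (hj : j < i), Γ.Adj (l[j]'(hj.trans hi)).1 v) →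
      frontExtract Γ v l ≠ none := by
  induction i with
  | zero =>
    intro l hi hv _
    match l with
    | p :: t =>
      rw [fe_cons_eq p t hv]
      simp
  | succ i ih =>
    intro l hi hv hadj
    match l with
    | p :: t =>
      have h0 : Γ.Adj p.1 v := hadj 0 (Nat.succ_pos i)
      rw [fe_cons_adj p t h0]
      simp only [Ne, Option.map_eq_none_iff]
      exact ih (by simpa using hi) (by simpa using hv)
        (fun j hj => by simpa using hadj (j + 1) (by omega))

theorem rw_front (x : Σ v, G v) :
    ∀ (A : List (Σ v, G v)) {B}, (∀ p ∈ A, Γ.Adj p.1 x.1) →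
      Rw Γ G (A ++ x :: B) (x :: (A ++ B)) := by
  intro A
  induction A with
  | nil => intro B _; exact Relation.ReflTransGen.refl
  | cons p A ih =>
    intro B hA
    have step1 : Rw Γ G (p :: (A ++ x :: B)) (p :: (x :: (A ++ B))) :=
      rwCons p (ih (fun q hq => hA q (by simp [hq])))
    refine Relation.ReflTransGen.trans step1 (Relation.ReflTransGen.single ?_)
    have hadj : Γ.Adj p.1 x.1 := hA p (by simp)
    exact Shuffle.swap [] (A ++ B) p.2 x.2 hadj

theorem fe_decomp {b : G v} {t l : List (Σ v, G v)}
    (h : frontExtract Γ v l = some (b, t)) :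
    ∃ A B, l = A ++ ⟨v, b⟩ :: B ∧ t = A ++ B ∧ ∀ p ∈ A, Γ.Adj p.1 v :=
  fe_decomp' l h

theorem fe_some_idx {b : G v} {t l : List (Σ v, G v)}
    (h : frontExtract Γ v l = some (b, t)) :
    ∃ i, ∃ hi : i < l.length, l[i] = ⟨v, b⟩ ∧ t = l.eraseIdx i ∧
      ∀ j (hj : j < i), Γ.Adj (l[j]'(hj.trans hi)).1 v :=
  fe_some_idx' l h

theorem rw_of_fe {b : G v} {t l : List (Σ v, G v)}
    (h : frontExtract Γ v l = some (b, t)) : Rw Γ G l (⟨v, b⟩ :: t) := by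
  obtain ⟨A, B, rfl, rfl, hadjA⟩ := fe_decomp h
  exact rw_front ⟨v, b⟩ A hadjA


/-- The relation between extraction results of shuffle-equivalent words. -/
def FERel (Γ : SimpleGraph V) (v : V)
    (o o' : Option (G v × List (Σ v, G v))) : Prop :=
  (o = none ∧ o' = none) ∨
    ∃ b t t', o = some (b, t) ∧ o' = some (b, t') ∧ Rw Γ G t t'

theorem FERel.refl' (o : Option (G v × List (Σ v, G v))) : FERel Γ v o o := by
  rcases o with _ | ⟨b, t⟩
  · exact Or.inl ⟨rfl, rfl⟩
  · exact Or.inr ⟨b, t, t, rfl, rfl, Relation.ReflTransGen.refl⟩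

theorem FERel.trans' {o₁ o₂ o₃ : Option (G v × List (Σ v, G v))}
    (h1 : FERel Γ v o₁ o₂) (h2 : FERel Γ v o₂ o₃) : FERel Γ v o₁ o₃ := by
  rcases h1 with ⟨h1a, h1b⟩ | ⟨b, t, t', hb, hb', hrw⟩
  · rcases h2 with ⟨h2a, h2b⟩ | ⟨c, s, s', hc, hc', hrw'⟩
    · exact Or.inl ⟨h1a, h2b⟩
    · rw [h1b] at hc; exact absurd hc (by simp)
  · rcases h2 with ⟨h2a, h2b⟩ | ⟨c, s, s', hc, hc', hrw'⟩
    · rw [hb'] at h2a; exact absurd h2a (by simp)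
    · rw [hb'] at hc
      simp only [Option.some.injEq, Prod.mk.injEq] at hc
      obtain ⟨rfl, rfl⟩ := hc
      exact Or.inr ⟨b, t, s', hb, hc', hrw.trans hrw'⟩

theorem FERel.mapCons {o o' : Option (G v × List (Σ v, G v))} (p : Σ v, G v)
    (h : FERel Γ v o o') :
    FERel Γ v (o.map (fun q => (q.1, p :: q.2))) (o'.map (fun q => (q.1, p :: q.2))) := by
  rcases h with ⟨h1, h2⟩ | ⟨b, t, t', hb, hb', hrw⟩
  · exact Or.inl (by simp [h1, h2])
  · exact Or.inr ⟨b, p :: t, p :: t', by simp [hb], by simp [hb'], rwCons p hrw⟩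

theorem fe_shuffle {l l' : List (Σ v, G v)} (h : Shuffle Γ G l l') (v : V) :
    FERel Γ v (frontExtract Γ v l) (frontExtract Γ v l') := by
  rcases h with @⟨l₁, l₂, u, w, a, b, hadj⟩
  induction l₁ with
  | nil =>
    simp only [nil_append]
    by_cases hu : u = v
    · subst hu
      rw [fe_cons_self a (⟨w, b⟩ :: l₂)]
      have hw : (⟨w, b⟩ : Σ v, G v).1 ≠ u := hadj.ne'
      rw [fe_cons_adj ⟨w, b⟩ (⟨u, a⟩ :: l₂) hadj.symm, fe_cons_self a l₂]
      exact Or.inr ⟨a, ⟨w, b⟩ :: l₂, ⟨w, b⟩ :: l₂, rfl, rfl, Relation.ReflTransGen.refl⟩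
    · by_cases hw : w = v
      · subst hw
        rw [fe_cons_adj ⟨u, a⟩ (⟨w, b⟩ :: l₂) hadj, fe_cons_self b l₂,
          fe_cons_self b (⟨u, a⟩ :: l₂)]
        exact Or.inr ⟨b, ⟨u, a⟩ :: l₂, ⟨u, a⟩ :: l₂, rfl, rfl, Relation.ReflTransGen.refl⟩
      · by_cases hau : Γ.Adj u v
        · by_cases haw : Γ.Adj w v
          · rw [fe_cons_adj ⟨u, a⟩ (⟨w, b⟩ :: l₂) hau, fe_cons_adj ⟨w, b⟩ l₂ haw,
              fe_cons_adj ⟨w, b⟩ (⟨u, a⟩ :: l₂) haw, fe_cons_adj ⟨u, a⟩ l₂ hau,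
              Option.map_map, Option.map_map]
            rcases hfe : frontExtract Γ v l₂ with _ | ⟨c, s⟩
            · exact Or.inl (by simp [hfe])
            · refine Or.inr ⟨c, ⟨u, a⟩ :: ⟨w, b⟩ :: s, ⟨w, b⟩ :: ⟨u, a⟩ :: s,
                by simp [hfe, Function.comp], by simp [hfe, Function.comp],
                Relation.ReflTransGen.single (Shuffle.swap [] s a b hadj)⟩
          · rw [fe_cons_adj ⟨u, a⟩ (⟨w, b⟩ :: l₂) hau,
              fe_cons_nadj ⟨w, b⟩ l₂ hw haw,
              fe_cons_nadj ⟨w, b⟩ (⟨u, a⟩ :: l₂) hw haw]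
            exact Or.inl (by simp)
        · by_cases haw : Γ.Adj w v
          · rw [fe_cons_nadj ⟨u, a⟩ (⟨w, b⟩ :: l₂) hu hau,
              fe_cons_adj ⟨w, b⟩ (⟨u, a⟩ :: l₂) haw,
              fe_cons_nadj ⟨u, a⟩ l₂ hu hau]
            exact Or.inl (by simp)
          · rw [fe_cons_nadj ⟨u, a⟩ (⟨w, b⟩ :: l₂) hu hau,
              fe_cons_nadj ⟨w, b⟩ (⟨u, a⟩ :: l₂) hw haw]
            exact Or.inl ⟨rfl, rfl⟩
  | cons p l₁ ih =>
    simp only [cons_append]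
    by_cases hp : p.1 = v
    · rw [fe_cons_eq p _ hp, fe_cons_eq p _ hp]
      exact Or.inr ⟨hp ▸ p.2, _, _, rfl, rfl,
        Relation.ReflTransGen.single (Shuffle.swap l₁ l₂ a b hadj)⟩
    · by_cases hpadj : Γ.Adj p.1 v
      · rw [fe_cons_adj p _ hpadj, fe_cons_adj p _ hpadj]
        exact FERel.mapCons p ih
      · rw [fe_cons_nadj p _ hp hpadj, fe_cons_nadj p _ hp hpadj]
        exact Or.inl ⟨rfl, rfl⟩

theorem fe_rw {l l' : List (Σ v, G v)} (h : Rw Γ G l l') (v : V) :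
    FERel Γ v (frontExtract Γ v l) (frontExtract Γ v l') := by
  induction h with
  | refl => exact FERel.refl' _
  | tail _ hs ih => exact FERel.trans' ih (fe_shuffle hs v)

theorem fe_none_rw {l l' : List (Σ v, G v)} (h : Rw Γ G l l')
    (hn : frontExtract Γ v l = none) : frontExtract Γ v l' = none := by
  rcases fe_rw h v with ⟨_, h2⟩ | ⟨b, t, t', hb, _, _⟩
  · exact h2
  · rw [hn] at hb; exact absurd hb (by simp)

theorem fe_some_rw {l l' : List (Σ v, G v)} {b : G v} {t} (h : Rw Γ G l l')
    (hs : frontExtract Γ v l = some (b, t)) :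
    ∃ t', frontExtract Γ v l' = some (b, t') ∧ Rw Γ G t t' := by
  rcases fe_rw h v with ⟨h1, _⟩ | ⟨c, s, s', hc, hc', hrw⟩
  · rw [hs] at h1; exact absurd h1 (by simp)
  · rw [hs] at hc
    simp only [Option.some.injEq, Prod.mk.injEq] at hc
    obtain ⟨rfl, rfl⟩ := hc
    exact ⟨s', hc', hrw⟩


/-! ### Reduced words -/

theorem reduced_nil : Reduced Γ G ([] : List (Σ v, G v)) := by
  constructor
  · simp
  · intro l' h
    have : l' = [] := by
      induction h with
      | refl => rfl
      | tail _ hs ih =>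
        subst ih
        exact ((shufflePerm hs).nil_eq).symm
    subst this; exact List.isChain_nil

theorem reduced_of_rw {l l' : List (Σ v, G v)} (hl : Reduced Γ G l)
    (h : Rw Γ G l l') : Reduced Γ G l' := by
  refine ⟨fun p hp => hl.1 p ((rwPerm h).mem_iff.mpr hp), fun m hm => hl.2 m (h.trans hm)⟩

theorem reduced_tail {p : Σ v, G v} {t : List (Σ v, G v)}
    (h : Reduced Γ G (p :: t)) : Reduced Γ G t := by
  refine ⟨fun q hq => h.1 q (by simp [hq]), fun m hm => ?_⟩
  have := h.2 (p :: m) (rwCons p hm)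
  exact this.tail

theorem not_chain'_of_pair {l : List (Σ v, G v)} {i : ℕ} (h : i + 1 < l.length)
    (heq : (l[i]'(by omega)).1 = (l[i+1]'h).1) :
    ¬ l.Chain' (fun p q => p.1 ≠ q.1) := by
  intro hc
  unfold List.Chain' at hc
  rw [List.isChain_iff_getElem] at hc
  exact hc i (by omega) (by simp [heq])

theorem exists_pair_of_not_chain' {l : List (Σ v, G v)}
    (h : ¬ l.Chain' (fun p q => p.1 ≠ q.1)) :
    ∃ i, ∃ hi : i + 1 < l.length, (l[i]'(by omega)).1 = (l[i+1]'hi).1 := by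
  unfold List.Chain' at h
  rw [List.isChain_iff_getElem] at h
  push_neg at h
  obtain ⟨i, hi, heq⟩ := h
  exact ⟨i, by omega, by simpa using heq⟩

/-- The key lemma: prepending a nontrivial syllable whose vertex cannot be
extracted from the front preserves reducedness. -/
theorem reduced_cons {c : G v} {t : List (Σ v, G v)} (ht : Reduced Γ G t)
    (hc : c ≠ 1) (hnone : frontExtract Γ v t = none) :
    Reduced Γ G (⟨v, c⟩ :: t) := by
  constructor
  · intro p hp
    rcases List.mem_cons.mp hp with rfl | hp'
    · exact hc
    · exact ht.1 p hp'
  · intro m hm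
    by_contra hchain
    obtain ⟨i, hi, heq⟩ := exists_pair_of_not_chain' hchain
    obtain ⟨tm, hfm, htm⟩ := fe_some_rw hm (fe_cons_self c t)
    obtain ⟨i', hi', hgi', herase, hadj⟩ := fe_some_idx hfm
    have hchaintm : tm.Chain' (fun p q => p.1 ≠ q.1) := ht.2 tm htm
    have hlen : tm.length = m.length - 1 := by
      rw [herase, List.length_eraseIdx, if_pos hi']
    subst herase
    rcases lt_trichotomy i' i with hlt | heqi | hgt
    · -- pair survives at (i-1, i) in tm
      obtain ⟨k, rfl⟩ : ∃ k, i = k + 1 := ⟨i - 1, by omega⟩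
      have h1 : k + 1 < (m.eraseIdx i').length := by omega
      refine not_chain'_of_pair h1 ?_ hchaintm
      have e1 : (m.eraseIdx i')[k]'(by omega) = m[k+1]'(by omega) :=
        List.getElem_eraseIdx_of_ge (by omega) (by omega)
      have e2 : (m.eraseIdx i')[k+1]'h1 = m[k+1+1]'hi :=
        List.getElem_eraseIdx_of_ge (by omega) (by omega)
      rw [e1, e2]; exact heq
    · -- i' = i : t would be frontable at v
      subst heqi
      have hnone' : frontExtract Γ v (m.eraseIdx i') = none := fe_none_rw htm hnone
      have hvi : (m[i'+1]'hi).1 = v := by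
        have h2 : (m[i']'(by omega)).1 = v := by rw [hgi']
        rw [← heq, h2]
      have h1 : i' < (m.eraseIdx i').length := by omega
      refine fe_ne_none i' h1 ?_ ?_ hnone'
      · have e1 : (m.eraseIdx i')[i']'h1 = m[i'+1]'hi :=
          List.getElem_eraseIdx_of_ge (by omega) (by omega)
        rw [e1]; exact hvi
      · intro j hj
        have e2 : (m.eraseIdx i')[j]'(hj.trans h1) = m[j]'(by omega) :=
          List.getElem_eraseIdx_of_lt (by omega) (by omega)
        rw [e2]; exact hadj j hj
    · rcases Nat.eq_or_lt_of_le hgt with heq2 | hgt2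
      · -- i' = i + 1 : Adj v v, contradiction
        exfalso
        have hvv : (m[i]'(by omega)).1 = v := by
          rw [heq]
          have h3 : m[i+1]'(by omega) = ⟨v, c⟩ := by
            subst heq2; exact hgi'
          rw [h3]
        have h4 := hadj i (by omega)
        rw [hvv] at h4
        exact Γ.irrefl h4
      · -- i + 1 < i' : pair survives at (i, i+1) in tm
        have h1 : i + 1 < (m.eraseIdx i').length := by omega
        refine not_chain'_of_pair h1 ?_ hchaintm
        have e1 : (m.eraseIdx i')[i]'(by omega) = m[i]'(by omega) :=
          List.getElem_eraseIdx_of_lt (by omega) (by omega)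
        have e2 : (m.eraseIdx i')[i+1]'h1 = m[i+1]'hi :=
          List.getElem_eraseIdx_of_lt (by omega) (by omega)
        rw [e1, e2]; exact heq

theorem fe_none_of_reduced {l : List (Σ v, G v)} {b : G v} {t}
    (hl : Reduced Γ G l) (h : frontExtract Γ v l = some (b, t)) :
    frontExtract Γ v t = none := by
  by_contra hne
  obtain ⟨⟨d, s⟩, hds⟩ := Option.ne_none_iff_exists'.mp hne
  have h1 : Rw Γ G l (⟨v, b⟩ :: ⟨v, d⟩ :: s) :=
    (rw_of_fe h).trans (rwCons ⟨v, b⟩ (rw_of_fe hds))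
  have := hl.2 _ h1
  unfold List.Chain' at this
  rw [List.isChain_cons_cons] at this
  exact this.1 rfl

theorem fe_val_ne_one {l : List (Σ v, G v)} {b : G v} {t}
    (hl : Reduced Γ G l) (h : frontExtract Γ v l = some (b, t)) : b ≠ 1 := by
  obtain ⟨A, B, hAB, _, _⟩ := fe_decomp h
  have : (⟨v, b⟩ : Σ v, G v) ∈ l := by rw [hAB]; simp
  exact hl.1 ⟨v, b⟩ this

theorem fe_head_none {p : Σ v, G v} {t : List (Σ v, G v)}
    (h : Reduced Γ G (p :: t)) : frontExtract Γ p.1 t = none := by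
  by_contra hne
  obtain ⟨⟨d, s⟩, hds⟩ := Option.ne_none_iff_exists'.mp hne
  have h1 : Rw Γ G (p :: t) (p :: ⟨p.1, d⟩ :: s) := rwCons p (rw_of_fe hds)
  have := h.2 _ h1
  unfold List.Chain' at this
  rw [List.isChain_cons_cons] at this
  exact this.1 rfl

/-! ### Multiplying a syllable into a word -/

open scoped Classical in
noncomputable def mulSyll (Γ : SimpleGraph V) (v : V) (a : G v)
    (l : List (Σ v, G v)) : List (Σ v, G v) :=
  match frontExtract Γ v l with
  | some (b, t) => if a * b = 1 then t else ⟨v, a * b⟩ :: t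
  | none => if a = 1 then l else ⟨v, a⟩ :: l

open scoped Classical in
theorem mulSyll_some {l : List (Σ v, G v)} {a b : G v} {t}
    (h : frontExtract Γ v l = some (b, t)) :
    mulSyll Γ v a l = if a * b = 1 then t else ⟨v, a * b⟩ :: t := by
  rw [mulSyll, h]

open scoped Classical in
theorem mulSyll_none {l : List (Σ v, G v)} {a : G v}
    (h : frontExtract Γ v l = none) :
    mulSyll Γ v a l = if a = 1 then l else ⟨v, a⟩ :: l := by
  rw [mulSyll, h]

theorem mulSyll_reduced {l : List (Σ v, G v)} (hl : Reduced Γ G l) (v : V) (a : G v) :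
    Reduced Γ G (mulSyll Γ v a l) := by
  rcases hfe : frontExtract Γ v l with _ | ⟨b, t⟩
  · rw [mulSyll_none hfe]
    split_ifs with ha
    · exact hl
    · exact reduced_cons hl ha hfe
  · rw [mulSyll_some hfe]
    have hred : Reduced Γ G (⟨v, b⟩ :: t) := reduced_of_rw hl (rw_of_fe hfe)
    have ht : Reduced Γ G t := reduced_tail hred
    have hnone := fe_none_of_reduced hl hfe
    split_ifs with hab
    · exact ht
    · exact reduced_cons ht hab hnone

theorem mulSyll_rw {l l' : List (Σ v, G v)} (h : Rw Γ G l l') (v : V) (a : G v) :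
    Rw Γ G (mulSyll Γ v a l) (mulSyll Γ v a l') := by
  rcases fe_rw h v with ⟨h1, h2⟩ | ⟨b, t, t', hb, hb', hrw⟩
  · rw [mulSyll_none h1, mulSyll_none h2]
    split_ifs with ha
    · exact h
    · exact rwCons _ h
  · rw [mulSyll_some hb, mulSyll_some hb']
    split_ifs with hab
    · exact hrw
    · exact rwCons _ hrw


/-! ### The set of reduced words up to shuffling -/

def RW (Γ : SimpleGraph V) (G : V → Type*) [∀ v, Group (G v)] :=
  {l : List (Σ v, G v) // Reduced Γ G l}

instance rwSetoid (Γ : SimpleGraph V) (G : V → Type*) [∀ v, Group (G v)] :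
    Setoid (RW Γ G) :=
  ⟨fun a b => Rw Γ G a.1 b.1,
   ⟨fun _ => Relation.ReflTransGen.refl, fun h => rwSymm h, fun h h' => h.trans h'⟩⟩

def W (Γ : SimpleGraph V) (G : V → Type*) [∀ v, Group (G v)] :=
  Quotient (rwSetoid Γ G)

def mk (Γ : SimpleGraph V) (l : List (Σ v, G v)) (h : Reduced Γ G l) : W Γ G :=
  Quotient.mk (rwSetoid Γ G) ⟨l, h⟩

theorem mk_eq_mk {l l' : List (Σ v, G v)} {hl : Reduced Γ G l} {hl' : Reduced Γ G l'}
    (h : Rw Γ G l l') : mk Γ l hl = mk Γ l' hl' := Quotient.sound h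

theorem mk_congr {l l' : List (Σ v, G v)} (h : l = l') {hl : Reduced Γ G l}
    {hl' : Reduced Γ G l'} : mk Γ l hl = mk Γ l' hl' := by subst h; rfl

/-- The action of a syllable on the set of reduced words. -/
noncomputable def act (Γ : SimpleGraph V) (v : V) (a : G v) : W Γ G → W Γ G :=
  Quotient.map (fun s => ⟨mulSyll Γ v a s.1, mulSyll_reduced s.2 v a⟩)
    (fun _ _ h => mulSyll_rw h v a)

theorem act_mk (v : V) (a : G v) (l : List (Σ v, G v)) (hl : Reduced Γ G l) :
    act Γ v a (mk Γ l hl) = mk Γ (mulSyll Γ v a l) (mulSyll_reduced hl v a) := rfl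

theorem act_some_cancel {l : List (Σ v, G v)} (hl : Reduced Γ G l) {a b : G v} {t}
    (h : frontExtract Γ v l = some (b, t)) (hab : a * b = 1) :
    act Γ v a (mk Γ l hl) = mk Γ t (reduced_tail (reduced_of_rw hl (rw_of_fe h))) := by
  rw [act_mk]
  exact mk_congr (by rw [mulSyll_some h, if_pos hab])

theorem act_some_ne {l : List (Σ v, G v)} (hl : Reduced Γ G l) {a b : G v} {t}
    (h : frontExtract Γ v l = some (b, t)) (hab : a * b ≠ 1) :
    act Γ v a (mk Γ l hl) = mk Γ (⟨v, a * b⟩ :: t)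
      (reduced_cons (reduced_tail (reduced_of_rw hl (rw_of_fe h))) hab
        (fe_none_of_reduced hl h)) := by
  rw [act_mk]
  exact mk_congr (by rw [mulSyll_some h, if_neg hab])

theorem act_none_one {l : List (Σ v, G v)} (hl : Reduced Γ G l) {a : G v}
    (h : frontExtract Γ v l = none) (ha : a = 1) :
    act Γ v a (mk Γ l hl) = mk Γ l hl := by
  rw [act_mk]
  exact mk_congr (by rw [mulSyll_none h, if_pos ha])

theorem act_none_ne {l : List (Σ v, G v)} (hl : Reduced Γ G l) {a : G v}
    (h : frontExtract Γ v l = none) (ha : a ≠ 1) :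
    act Γ v a (mk Γ l hl) = mk Γ (⟨v, a⟩ :: l) (reduced_cons hl ha h) := by
  rw [act_mk]
  exact mk_congr (by rw [mulSyll_none h, if_neg ha])

theorem act_one (v : V) (x : W Γ G) : act Γ v 1 x = x := by
  refine Quotient.inductionOn x ?_
  rintro ⟨l, hl⟩
  show act Γ v 1 (mk Γ l hl) = mk Γ l hl
  rcases hfe : frontExtract Γ v l with _ | ⟨b, t⟩
  · exact act_none_one hl hfe rfl
  · have hb : (1 : G v) * b ≠ 1 := by simpa using fe_val_ne_one hl hfe
    rw [act_some_ne hl hfe hb]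
    refine (mk_eq_mk ?_).symm
    simpa using rw_of_fe hfe

theorem act_mul (v : V) (a b : G v) (x : W Γ G) :
    act Γ v (a * b) x = act Γ v a (act Γ v b x) := by
  refine Quotient.inductionOn x ?_
  rintro ⟨l, hl⟩
  show act Γ v (a * b) (mk Γ l hl) = act Γ v a (act Γ v b (mk Γ l hl))
  rcases hfe : frontExtract Γ v l with _ | ⟨c, t⟩
  · by_cases hb : b = 1
    · subst hb
      rw [act_one, mul_one]
    · rw [act_none_ne hl hfe hb]
      have hfe2 : frontExtract Γ v (⟨v, b⟩ :: l) = some (b, l) := fe_cons_self b l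
      by_cases hab : a * b = 1
      · rw [act_some_cancel _ hfe2 hab, act_none_one hl hfe hab]
      · rw [act_some_ne _ hfe2 hab, act_none_ne hl hfe hab]
  · have hml := rw_of_fe hfe
    have hred : Reduced Γ G (⟨v, c⟩ :: t) := reduced_of_rw hl hml
    have ht : Reduced Γ G t := reduced_tail hred
    have hnone : frontExtract Γ v t = none := fe_none_of_reduced hl hfe
    rw [show mk Γ l hl = mk Γ (⟨v, c⟩ :: t) hred from mk_eq_mk hml]
    have hfec : frontExtract Γ v (⟨v, c⟩ :: t) = some (c, t) := fe_cons_self c t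
    by_cases hbc : b * c = 1
    · rw [act_some_cancel hred hfec hbc]
      by_cases ha : a = 1
      · rw [act_none_one _ hnone ha]
        have habc : a * b * c = 1 := by rw [mul_assoc, hbc, ha, mul_one]
        exact act_some_cancel hred hfec habc
      · rw [act_none_ne _ hnone ha]
        have habc : a * b * c ≠ 1 := by rwa [mul_assoc, hbc, mul_one]
        rw [act_some_ne hred hfec habc]
        exact mk_congr (by rw [mul_assoc, hbc, mul_one])
    · rw [act_some_ne hred hfec hbc]
      have hfe3 : frontExtract Γ v (⟨v, b * c⟩ :: t) = some (b * c, t) := fe_cons_self _ t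
      by_cases habc : a * (b * c) = 1
      · rw [act_some_cancel _ hfe3 habc]
        exact act_some_cancel hred hfec (by rwa [mul_assoc])
      · rw [act_some_ne _ hfe3 habc, act_some_ne hred hfec (by rwa [mul_assoc])]
        exact mk_congr (by rw [mul_assoc])


theorem act_comm_aux {u w : V} (hadj : Γ.Adj u w) (a : G u) (b : G w)
    {l : List (Σ v, G v)} (hl : Reduced Γ G l) {c : G u} {s}
    (hfu : frontExtract Γ u l = some (c, s))
    (hfw : frontExtract Γ w l = none) :
    act Γ u a (act Γ w b (mk Γ l hl)) = act Γ w b (act Γ u a (mk Γ l hl)) := by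
  by_cases ha : a = 1
  · subst ha; rw [act_one, act_one]
  by_cases hb : b = 1
  · subst hb; rw [act_one, act_one]
  have hml := rw_of_fe hfu
  have hm : Reduced Γ G (⟨u, c⟩ :: s) := reduced_of_rw hl hml
  have ht : Reduced Γ G s := reduced_tail hm
  have hfus : frontExtract Γ u s = none := fe_none_of_reduced hl hfu
  have hfwm : frontExtract Γ w (⟨u, c⟩ :: s) = none := fe_none_rw hml hfw
  have hfws : frontExtract Γ w s = none := by
    have := hfwm
    rw [fe_cons_adj ⟨u, c⟩ s hadj, Option.map_eq_none_iff] at this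
    exact this
  rw [show mk Γ l hl = mk Γ (⟨u, c⟩ :: s) hm from mk_eq_mk hml]
  have hfum : frontExtract Γ u (⟨u, c⟩ :: s) = some (c, s) := fe_cons_self c s
  rw [act_none_ne hm hfwm hb]
  have hfu2 : frontExtract Γ u (⟨w, b⟩ :: ⟨u, c⟩ :: s) = some (c, ⟨w, b⟩ :: s) := by
    rw [fe_cons_adj ⟨w, b⟩ _ hadj.symm, hfum]; rfl
  by_cases hac : a * c = 1
  · rw [act_some_cancel _ hfu2 hac, act_some_cancel hm hfum hac,
      act_none_ne ht hfws hb]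
  · rw [act_some_ne _ hfu2 hac, act_some_ne hm hfum hac]
    have hfw2 : frontExtract Γ w (⟨u, a * c⟩ :: s) = none := by
      rw [fe_cons_adj ⟨u, a * c⟩ s hadj, hfws]; rfl
    rw [act_none_ne _ hfw2 hb]
    exact mk_eq_mk (Relation.ReflTransGen.single (Shuffle.swap [] s (a * c) b hadj))

theorem act_comm {u w : V} (hadj : Γ.Adj u w) (a : G u) (b : G w) (x : W Γ G) :
    act Γ u a (act Γ w b x) = act Γ w b (act Γ u a x) := by
  refine Quotient.inductionOn x ?_
  rintro ⟨l, hl⟩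
  show act Γ u a (act Γ w b (mk Γ l hl)) = act Γ w b (act Γ u a (mk Γ l hl))
  have hne : u ≠ w := hadj.ne
  rcases hfu : frontExtract Γ u l with _ | ⟨c, s⟩
  · rcases hfw : frontExtract Γ w l with _ | ⟨d, t⟩
    · -- neither frontable
      by_cases ha : a = 1
      · subst ha; rw [act_one, act_one]
      by_cases hb : b = 1
      · subst hb; rw [act_one, act_one]
      rw [act_none_ne hl hfw hb, act_none_ne hl hfu ha]
      have h1 : frontExtract Γ u (⟨w, b⟩ :: l) = none := by
        rw [fe_cons_adj ⟨w, b⟩ l hadj.symm, hfu]; rfl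
      have h2 : frontExtract Γ w (⟨u, a⟩ :: l) = none := by
        rw [fe_cons_adj ⟨u, a⟩ l hadj, hfw]; rfl
      rw [act_none_ne _ h1 ha, act_none_ne _ h2 hb]
      exact mk_eq_mk (Relation.ReflTransGen.single (Shuffle.swap [] l a b hadj))
    · exact (act_comm_aux hadj.symm b a hl hfw hfu).symm
  · rcases hfw : frontExtract Γ w l with _ | ⟨d, t⟩
    · exact act_comm_aux hadj a b hl hfu hfw
    · -- both frontable
      have hml := rw_of_fe hfu
      obtain ⟨t', hfwm', htt'⟩ := fe_some_rw hml hfw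
      rw [fe_cons_adj ⟨u, c⟩ s hadj, Option.map_eq_some_iff] at hfwm'
      obtain ⟨⟨d', r⟩, hfws, hmk⟩ := hfwm'
      simp only [Prod.mk.injEq] at hmk
      obtain ⟨rfl, rfl⟩ := hmk
      have hm2rw : Rw Γ G l (⟨u, c⟩ :: ⟨w, d'⟩ :: r) :=
        hml.trans (rwCons ⟨u, c⟩ (rw_of_fe hfws))
      have hm2 : Reduced Γ G (⟨u, c⟩ :: ⟨w, d'⟩ :: r) := reduced_of_rw hl hm2rw
      rw [show mk Γ l hl = mk Γ (⟨u, c⟩ :: ⟨w, d'⟩ :: r) hm2 from mk_eq_mk hm2rw]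
      have hfum2 : frontExtract Γ u (⟨u, c⟩ :: ⟨w, d'⟩ :: r) = some (c, ⟨w, d'⟩ :: r) :=
        fe_cons_self c _
      have hfwm2 : frontExtract Γ w (⟨u, c⟩ :: ⟨w, d'⟩ :: r) = some (d', ⟨u, c⟩ :: r) := by
        rw [fe_cons_adj ⟨u, c⟩ _ hadj, fe_cons_self d' r]; rfl
      have hwdu : frontExtract Γ u (⟨w, d'⟩ :: r) = none := fe_none_of_reduced hm2 hfum2
      have hucw : frontExtract Γ w (⟨u, c⟩ :: r) = none := fe_none_of_reduced hm2 hfwm2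
      have hur : frontExtract Γ u r = none := by
        have := hwdu
        rw [fe_cons_adj ⟨w, d'⟩ r hadj.symm, Option.map_eq_none_iff] at this
        exact this
      have hwr : frontExtract Γ w r = none := by
        have := hucw
        rw [fe_cons_adj ⟨u, c⟩ r hadj, Option.map_eq_none_iff] at this
        exact this
      by_cases hbd : b * d' = 1
      · rw [act_some_cancel hm2 hfwm2 hbd]
        have h1 : frontExtract Γ u (⟨u, c⟩ :: r) = some (c, r) := fe_cons_self c r
        by_cases hac : a * c = 1
        · rw [act_some_cancel _ h1 hac, act_some_cancel hm2 hfum2 hac]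
          have h2 : frontExtract Γ w (⟨w, d'⟩ :: r) = some (d', r) := fe_cons_self d' r
          rw [act_some_cancel _ h2 hbd]
        · rw [act_some_ne _ h1 hac, act_some_ne hm2 hfum2 hac]
          have h3 : frontExtract Γ w (⟨u, a * c⟩ :: ⟨w, d'⟩ :: r)
              = some (d', ⟨u, a * c⟩ :: r) := by
            rw [fe_cons_adj ⟨u, a * c⟩ _ hadj, fe_cons_self d' r]; rfl
          rw [act_some_cancel _ h3 hbd]
      · rw [act_some_ne hm2 hfwm2 hbd]
        have h4 : frontExtract Γ u (⟨w, b * d'⟩ :: ⟨u, c⟩ :: r)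
            = some (c, ⟨w, b * d'⟩ :: r) := by
          rw [fe_cons_adj ⟨w, b * d'⟩ _ hadj.symm, fe_cons_self c r]; rfl
        by_cases hac : a * c = 1
        · rw [act_some_cancel _ h4 hac, act_some_cancel hm2 hfum2 hac]
          have h5 : frontExtract Γ w (⟨w, d'⟩ :: r) = some (d', r) := fe_cons_self d' r
          rw [act_some_ne _ h5 hbd]
        · rw [act_some_ne _ h4 hac, act_some_ne hm2 hfum2 hac]
          have h6 : frontExtract Γ w (⟨u, a * c⟩ :: ⟨w, d'⟩ :: r)
              = some (d', ⟨u, a * c⟩ :: r) := by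
            rw [fe_cons_adj ⟨u, a * c⟩ _ hadj, fe_cons_self d' r]; rfl
          rw [act_some_ne _ h6 hbd]
          exact mk_eq_mk (Relation.ReflTransGen.single
            (Shuffle.swap [] r (a * c) (b * d') hadj))


/-! ### The action of the graph product on reduced words -/

noncomputable def actPerm (Γ : SimpleGraph V) (v : V) (a : G v) : Equiv.Perm (W Γ G) :=
{ toFun := act Γ v a, invFun := act Γ v a⁻¹,
  left_inv := fun x => by rw [← act_mul, inv_mul_cancel, act_one],
  right_inv := fun x => by rw [← act_mul, mul_inv_cancel, act_one] }

noncomputable def actHom (Γ : SimpleGraph V) (v : V) : G v →* Equiv.Perm (W Γ G) :=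
{ toFun := actPerm Γ v,
  map_one' := Equiv.ext fun x => act_one v x,
  map_mul' := fun a b => Equiv.ext fun x => by
    show act Γ v (a * b) x = (actPerm Γ v a * actPerm Γ v b) x
    rw [act_mul]; rfl }

theorem actHom_apply (v : V) (a : G v) (x : W Γ G) : actHom Γ v a x = act Γ v a x := rfl

noncomputable def phi (Γ : SimpleGraph V) (G : V → Type*) [∀ v, Group (G v)] :
    Monoid.CoprodI G →* Equiv.Perm (W Γ G) :=
  Monoid.CoprodI.lift (actHom Γ)

theorem phi_le_ker : graphProductRels Γ G ≤ (phi Γ G).ker := by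
  apply Subgroup.normalClosure_le_normal
  rintro x ⟨u, w, a, b, hadj, rfl⟩
  have hc : phi Γ G (Monoid.CoprodI.of a) * phi Γ G (Monoid.CoprodI.of b)
      = phi Γ G (Monoid.CoprodI.of b) * phi Γ G (Monoid.CoprodI.of a) := by
    refine Equiv.ext fun x => ?_
    simp only [phi, Monoid.CoprodI.lift_of, Equiv.Perm.mul_apply, actHom_apply]
    exact act_comm hadj a b x
  simp only [SetLike.mem_coe, MonoidHom.mem_ker, map_mul, map_inv]
  rw [hc]
  group

noncomputable def phiBar (Γ : SimpleGraph V) (G : V → Type*) [∀ v, Group (G v)] :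
    GraphProduct Γ G →* Equiv.Perm (W Γ G) :=
  QuotientGroup.lift _ (phi Γ G) phi_le_ker

theorem phiBar_mk (y : Monoid.CoprodI G) :
    phiBar Γ G (QuotientGroup.mk y) = phi Γ G y := rfl

/-- The normal form of an element of the graph product. -/
noncomputable def nf (Γ : SimpleGraph V) (G : V → Type*) [∀ v, Group (G v)]
    (x : GraphProduct Γ G) : W Γ G :=
  phiBar Γ G x (mk Γ [] reduced_nil)

def wordProdW (Γ : SimpleGraph V) (G : V → Type*) [∀ v, Group (G v)] :
    W Γ G → GraphProduct Γ G :=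
  Quotient.lift (fun s : RW Γ G => wordProd Γ G s.1) (fun _ _ h => wordProd_rw h)

theorem wordProdW_mk (l : List (Σ v, G v)) (hl : Reduced Γ G l) :
    wordProdW Γ G (mk Γ l hl) = wordProd Γ G l := rfl

theorem wordProdW_act (v : V) (a : G v) (x : W Γ G) :
    wordProdW Γ G (act Γ v a x) = GraphProduct.of Γ G a * wordProdW Γ G x := by
  refine Quotient.inductionOn x ?_
  rintro ⟨l, hl⟩
  show wordProdW Γ G (act Γ v a (mk Γ l hl))
    = GraphProduct.of Γ G a * wordProdW Γ G (mk Γ l hl)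
  rcases hfe : frontExtract Γ v l with _ | ⟨c, t⟩
  · by_cases ha : a = 1
    · rw [act_none_one hl hfe ha, ha, map_one, one_mul]
    · rw [act_none_ne hl hfe ha, wordProdW_mk, wordProdW_mk, wordProd_cons]
  · have hml := rw_of_fe hfe
    have hred := reduced_of_rw hl hml
    rw [show mk Γ l hl = mk Γ (⟨v, c⟩ :: t) hred from mk_eq_mk hml]
    have hfec : frontExtract Γ v (⟨v, c⟩ :: t) = some (c, t) := fe_cons_self c t
    by_cases hac : a * c = 1
    · rw [act_some_cancel hred hfec hac, wordProdW_mk, wordProdW_mk, wordProd_cons,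
        ← mul_assoc]
      show wordProd Γ G t = GraphProduct.of Γ G a * GraphProduct.of Γ G c * wordProd Γ G t
      rw [← map_mul, hac, map_one, one_mul]
    · rw [act_some_ne hred hfec hac, wordProdW_mk, wordProdW_mk, wordProd_cons,
        wordProd_cons]
      show GraphProduct.of Γ G (a * c) * wordProd Γ G t
        = GraphProduct.of Γ G a * (GraphProduct.of Γ G c * wordProd Γ G t)
      rw [map_mul, mul_assoc]

def gmk (Γ : SimpleGraph V) (G : V → Type*) [∀ v, Group (G v)] :
    Monoid.CoprodI G →* GraphProduct Γ G :=
  QuotientGroup.mk' (graphProductRels Γ G)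

theorem wordProdW_phi (y : Monoid.CoprodI G) :
    ∀ w : W Γ G, wordProdW Γ G (phi Γ G y w) = gmk Γ G y * wordProdW Γ G w := by
  refine Monoid.CoprodI.induction_on
    (motive := fun y => ∀ w : W Γ G,
      wordProdW Γ G (phi Γ G y w) = gmk Γ G y * wordProdW Γ G w) y ?_ ?_ ?_
  · intro w
    rw [map_one, map_one, one_mul]
    rfl
  · intro v a w
    have h1 : phi Γ G (Monoid.CoprodI.of a) = actHom Γ v a := Monoid.CoprodI.lift_of _ _
    rw [h1, actHom_apply]
    exact wordProdW_act v a w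
  · intro x y ihx ihy w
    rw [map_mul, map_mul]
    show wordProdW Γ G (phi Γ G x (phi Γ G y w)) = _
    rw [ihx, ihy, mul_assoc]

theorem wordProdW_nf (x : GraphProduct Γ G) : wordProdW Γ G (nf Γ G x) = x := by
  refine QuotientGroup.induction_on x ?_
  intro y
  show wordProdW Γ G (phi Γ G y (mk Γ [] reduced_nil)) = gmk Γ G y
  rw [wordProdW_phi, wordProdW_mk]
  show gmk Γ G y * wordProd Γ G [] = _
  rw [wordProd_nil, mul_one]

theorem nf_wordProd : ∀ (l : List (Σ v, G v)) (hl : Reduced Γ G l),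
    nf Γ G (wordProd Γ G l) = mk Γ l hl := by
  intro l
  induction l with
  | nil =>
    intro hl
    show phiBar Γ G (wordProd Γ G []) (mk Γ [] reduced_nil) = _
    rw [wordProd_nil, map_one]
    rfl
  | cons p t ih =>
    intro hl
    have ht := reduced_tail hl
    show phiBar Γ G (wordProd Γ G (p :: t)) (mk Γ [] reduced_nil) = _
    rw [wordProd_cons, map_mul]
    show phiBar Γ G (GraphProduct.of Γ G p.2) (nf Γ G (wordProd Γ G t)) = _
    rw [ih ht]
    have h1 : phiBar Γ G (GraphProduct.of Γ G p.2) = actHom Γ p.1 p.2 := by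
      show phiBar Γ G (QuotientGroup.mk (Monoid.CoprodI.of p.2)) = _
      rw [phiBar_mk]
      exact Monoid.CoprodI.lift_of _ _
    rw [h1, actHom_apply]
    rw [act_none_ne ht (fe_head_none hl) (hl.1 p (by simp))]

theorem nf_wordProdW (w : W Γ G) : nf Γ G (wordProdW Γ G w) = w := by
  refine Quotient.inductionOn w ?_
  rintro ⟨l, hl⟩
  exact nf_wordProd l hl


/-! ### Transport along vertexwise bijections -/

section Map

variable {H : V → Type*} [∀ v, Group (H v)]

def sylMap (f : ∀ v, G v ≃ H v) : (Σ v, G v) → (Σ v, H v) := fun p => ⟨p.1, f p.1 p.2⟩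

theorem sylMap_inv (f : ∀ v, G v ≃ H v) (p : Σ v, G v) :
    sylMap (fun v => (f v).symm) (sylMap f p) = p := by
  cases p; simp [sylMap]; exact (f _).symm_apply_apply _

theorem map_sylMap_inv (f : ∀ v, G v ≃ H v) (l : List (Σ v, G v)) :
    (l.map (sylMap f)).map (sylMap (fun v => (f v).symm)) = l := by
  have hcomp : (sylMap (fun v => (f v).symm)) ∘ sylMap f = id := funext (sylMap_inv f)
  rw [List.map_map, hcomp, List.map_id]

theorem shuffle_map (f : ∀ v, G v ≃ H v) {l l' : List (Σ v, G v)}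
    (h : Shuffle Γ G l l') :
    Shuffle Γ H (l.map (sylMap f)) (l'.map (sylMap f)) := by
  rcases h with @⟨l₁, l₂, u, w, a, b, hadj⟩
  simp only [List.map_append, List.map_cons]
  exact Shuffle.swap _ _ (f u a) (f w b) hadj

theorem rw_map (f : ∀ v, G v ≃ H v) {l l' : List (Σ v, G v)} (h : Rw Γ G l l') :
    Rw Γ H (l.map (sylMap f)) (l'.map (sylMap f)) :=
  Relation.ReflTransGen.lift (List.map (sylMap f)) (fun _ _ hs => shuffle_map f hs) _ _ h

theorem rw_map_inv (f : ∀ v, G v ≃ H v) {l : List (Σ v, G v)} {m : List (Σ v, H v)}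
    (h : Rw Γ H (l.map (sylMap f)) m) :
    ∃ l', m = l'.map (sylMap f) ∧ Rw Γ G l l' := by
  induction h with
  | refl => exact ⟨l, rfl, Relation.ReflTransGen.refl⟩
  | @tail b c _ hs ih =>
    obtain ⟨l₀, rfl, hl₀⟩ := ih
    refine ⟨c.map (sylMap (fun v => (f v).symm)), ?_, ?_⟩
    · rw [List.map_map]
      have hcomp : (sylMap f) ∘ sylMap (fun v => (f v).symm) = id := by
        funext q
        have := sylMap_inv (fun v => (f v).symm) q
        simpa [sylMap] using this
      rw [hcomp, List.map_id]
    · refine hl₀.tail ?_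
      have hs' := shuffle_map (fun v => (f v).symm) hs
      rwa [map_sylMap_inv] at hs'

theorem reduced_map (f : ∀ v, G v ≃ H v) (hf : ∀ v, f v 1 = 1)
    {l : List (Σ v, G v)} (hl : Reduced Γ G l) :
    Reduced Γ H (l.map (sylMap f)) := by
  constructor
  · intro q hq
    rw [List.mem_map] at hq
    obtain ⟨p, hp, rfl⟩ := hq
    show f p.1 p.2 ≠ 1
    intro h1
    exact hl.1 p hp ((f p.1).injective (h1.trans (hf p.1).symm))
  · intro m hm
    obtain ⟨l', rfl, hl'⟩ := rw_map_inv f hm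
    have hch := hl.2 l' hl'
    unfold List.Chain'
    rw [List.isChain_map]
    exact hch

noncomputable def mapW (f : ∀ v, G v ≃ H v) (hf : ∀ v, f v 1 = 1) : W Γ G → W Γ H :=
  Quotient.map (fun s => ⟨s.1.map (sylMap f), reduced_map f hf s.2⟩)
    (fun _ _ h => rw_map f h)

theorem mapW_mk (f : ∀ v, G v ≃ H v) (hf : ∀ v, f v 1 = 1) (l : List (Σ v, G v))
    (hl : Reduced Γ G l) :
    mapW f hf (mk Γ l hl) = mk Γ (l.map (sylMap f)) (reduced_map f hf hl) := rfl

theorem mapW_symm_apply (f : ∀ v, G v ≃ H v) (hf : ∀ v, f v 1 = 1)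
    (hf' : ∀ v, (f v).symm 1 = 1) (w : W Γ G) :
    mapW (fun v => (f v).symm) hf' (mapW f hf w) = w := by
  refine Quotient.inductionOn w ?_
  rintro ⟨l, hl⟩
  show mapW (fun v => (f v).symm) hf' (mapW f hf (mk Γ l hl)) = mk Γ l hl
  rw [mapW_mk, mapW_mk]
  exact mk_congr (map_sylMap_inv f l)

end Map

end GPAux

/-- Bijections between vertex groups preserving the identity induce a bijection
between the graph products, mapping reduced words to reduced words syllable-wise. -/
theorem stmt_8 {V : Type*} (Γ : SimpleGraph V) (G H : V → Type*)
    [∀ v, Group (G v)] [∀ v, Group (H v)]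
    (f : ∀ v, G v ≃ H v) (hf : ∀ v, f v 1 = 1) :
    ∃ F : GraphProduct Γ G ≃ GraphProduct Γ H,
      ∀ l : List (Σ v, G v), Reduced Γ G l →
        Reduced Γ H (l.map (fun p => ⟨p.1, f p.1 p.2⟩)) ∧
        F (wordProd Γ G l) = wordProd Γ H (l.map (fun p => ⟨p.1, f p.1 p.2⟩)) := by
  classical
  have hf' : ∀ v, (f v).symm 1 = 1 := by
    intro v
    rw [← hf v, Equiv.symm_apply_apply]
  refine ⟨{
    toFun := fun x => GPAux.wordProdW Γ H (GPAux.mapW f hf (GPAux.nf Γ G x))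
    invFun := fun y => GPAux.wordProdW Γ G
      (GPAux.mapW (fun v => (f v).symm) hf' (GPAux.nf Γ H y))
    left_inv := fun x => by
      dsimp only
      rw [GPAux.nf_wordProdW, GPAux.mapW_symm_apply f hf hf', GPAux.wordProdW_nf]
    right_inv := fun y => by
      dsimp only
      rw [GPAux.nf_wordProdW]
      have : GPAux.mapW f hf (GPAux.mapW (fun v => (f v).symm) hf'
          (GPAux.nf Γ H y)) = GPAux.nf Γ H y := by
        have := GPAux.mapW_symm_apply (fun v => (f v).symm) hf'
          (by intro v; rw [Equiv.symm_symm]; exact hf v) (GPAux.nf Γ H y)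
        exact this
      rw [this, GPAux.wordProdW_nf] }, ?_⟩
  intro l hl
  refine ⟨GPAux.reduced_map f hf hl, ?_⟩
  show GPAux.wordProdW Γ H (GPAux.mapW f hf (GPAux.nf Γ G (wordProd Γ G l))) = _
  rw [GPAux.nf_wordProd l hl, GPAux.mapW_mk, GPAux.wordProdW_mk]
  rfl
end

section
/- Normal Form Theorem for graph products: Let G_Γ be the graph product of groups G_v over a simplicial graph Γ. Every element g ≠ 1 of G_Γ can be written as g = g_1 g_2 ⋯ g_k where (g_1,…,g_k) is a reduced word, and this reduced word is unique up to syllable shuffling. -/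
namespace GPNF
open List

variable {V : Type*} {Γ : SimpleGraph V} {G : V → Type*}

abbrev SRel (Γ : SimpleGraph V) (G : V → Type*) :
    List (Σ v, G v) → List (Σ v, G v) → Prop :=
  Relation.ReflTransGen (Shuffle Γ G)

theorem shuffle_iff {m m' : List (Σ v, G v)} :
    Shuffle Γ G m m' ↔ ∃ (x₁ x₂ : List (Σ v, G v)) (u u' : V) (c : G u) (d : G u'),
      Γ.Adj u u' ∧ m = x₁ ++ ⟨u, c⟩ :: ⟨u', d⟩ :: x₂ ∧ m' = x₁ ++ ⟨u', d⟩ :: ⟨u, c⟩ :: x₂ := by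
  constructor
  · intro h
    cases h with
    | swap l₁ l₂ a b h => exact ⟨l₁, l₂, _, _, a, b, h, rfl, rfl⟩
  · rintro ⟨x₁, x₂, u, u', c, d, h, rfl, rfl⟩
    exact Shuffle.swap x₁ x₂ c d h

theorem shuffle_symm {l l' : List (Σ v, G v)} (h : Shuffle Γ G l l') : Shuffle Γ G l' l := by
  cases h with
  | swap l₁ l₂ a b h => exact Shuffle.swap l₁ l₂ b a h.symm

theorem SRel.rfl' {l : List (Σ v, G v)} : SRel Γ G l l := Relation.ReflTransGen.refl

theorem SRel.trans' {l₁ l₂ l₃ : List (Σ v, G v)} (h : SRel Γ G l₁ l₂) (h' : SRel Γ G l₂ l₃) :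
    SRel Γ G l₁ l₃ := Relation.ReflTransGen.trans h h'

theorem SRel.symm' {l l' : List (Σ v, G v)} (h : SRel Γ G l l') : SRel Γ G l' l := by
  induction h with
  | refl => exact Relation.ReflTransGen.refl
  | tail _ h ih => exact Relation.ReflTransGen.trans (Relation.ReflTransGen.single (shuffle_symm h)) ih

theorem SRel.cons' {l l' : List (Σ v, G v)} (x : Σ v, G v) (h : SRel Γ G l l') :
    SRel Γ G (x :: l) (x :: l') := by
  induction h with
  | refl => exact Relation.ReflTransGen.refl
  | tail _ h ih =>
    cases h with
    | swap l₁ l₂ a b hadj =>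
      exact ih.tail (by simpa using Shuffle.swap (x :: l₁) l₂ a b hadj)
theorem SRel.front {v : V} (b : G v) (w₁ w₂ : List (Σ v, G v))
    (h : ∀ p ∈ w₁, Γ.Adj p.1 v) :
    SRel Γ G (w₁ ++ ⟨v, b⟩ :: w₂) (⟨v, b⟩ :: (w₁ ++ w₂)) := by
  induction w₁ with
  | nil => exact Relation.ReflTransGen.refl
  | cons p t ih =>
    have h1 : SRel Γ G (p :: (t ++ ⟨v, b⟩ :: w₂)) (p :: ⟨v, b⟩ :: (t ++ w₂)) :=
      SRel.cons' p (ih (fun q hq => h q (mem_cons_of_mem p hq)))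
    refine Relation.ReflTransGen.trans (by simpa using h1) (Relation.ReflTransGen.single ?_)
    have := Shuffle.swap ([] : List (Σ v, G v)) (t ++ w₂) p.2 b (h p mem_cons_self)
    simpa using this

/-- `v` can be brought to the front of `l` by shuffling. -/
def FrontTo (Γ : SimpleGraph V) (G : V → Type*) (v : V) (l : List (Σ v, G v)) : Prop :=
  ∃ (b : G v) (m : List (Σ v, G v)), SRel Γ G l (⟨v, b⟩ :: m)

/-- The key invariant: anything shuffle-equivalent to `⟨v,a⟩ :: l` decomposes as
`w₁ ++ ⟨v,a⟩ :: w₂` where everything in `w₁` is adjacent to `v` and `w₁ ++ w₂ ~ l`. -/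
theorem marker_invariant {v : V} {a : G v} {l w : List (Σ v, G v)}
    (h : SRel Γ G (⟨v, a⟩ :: l) w) :
    ∃ w₁ w₂, w = w₁ ++ ⟨v, a⟩ :: w₂ ∧ SRel Γ G l (w₁ ++ w₂) ∧ ∀ p ∈ w₁, Γ.Adj p.1 v := by
  induction h with
  | refl => exact ⟨[], l, rfl, Relation.ReflTransGen.refl, by simp⟩
  | tail _ hstep ih =>
    obtain ⟨w₁, w₂, rfl, hrel, hadj⟩ := ih
    obtain ⟨x₁, x₂, u, u', c, d, huv, hE, rfl⟩ := shuffle_iff.mp hstep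
    rw [List.append_eq_append_iff] at hE
    rcases hE with ⟨t, hx₁, hE⟩ | ⟨t, hw₁, hE⟩
    · cases t with
      | nil =>
        simp only [nil_append] at hE
        obtain ⟨hM, hw₂⟩ := List.cons_eq_cons.mp hE
        simp only [append_nil] at hx₁
        have hu : v = u := congrArg Sigma.fst hM
        have huv' : Γ.Adj v u' := by rw [hu]; exact huv
        refine ⟨w₁ ++ [⟨u', d⟩], x₂, ?_, ?_, ?_⟩
        · rw [hx₁, ← hM]; simp
        · rw [hw₂] at hrel; simpa using hrel
        · intro p hp
          rcases mem_append.mp hp with hp | hp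
          · exact hadj p hp
          · simp only [mem_singleton] at hp; subst hp; exact huv'.symm
      | cons t₀ t' =>
        obtain ⟨hM, hw₂⟩ := List.cons_eq_cons.mp hE
        refine ⟨w₁, t' ++ ⟨u', d⟩ :: ⟨u, c⟩ :: x₂, ?_, ?_, hadj⟩
        · rw [hx₁, ← hM]; simp [append_assoc]
        · rw [hw₂] at hrel
          refine Relation.ReflTransGen.tail hrel ?_
          have := Shuffle.swap (w₁ ++ t') x₂ c d huv
          simpa [append_assoc] using this
    · cases t with
      | nil =>
        simp only [nil_append] at hE
        obtain ⟨hM, hw₂⟩ := List.cons_eq_cons.mp hE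
        simp only [append_nil] at hw₁
        have hu : u = v := congrArg Sigma.fst hM
        have huv' : Γ.Adj v u' := by rw [← hu]; exact huv
        refine ⟨w₁ ++ [⟨u', d⟩], x₂, ?_, ?_, ?_⟩
        · rw [hw₁, hM]; simp
        · rw [← hw₂] at hrel; simpa using hrel
        · intro p hp
          rcases mem_append.mp hp with hp | hp
          · exact hadj p hp
          · simp only [mem_singleton] at hp; subst hp; exact huv'.symm
      | cons t₀ t' =>
        obtain ⟨hM, hE2⟩ := List.cons_eq_cons.mp hE
        cases t' with
        | nil =>
          replace hE2 : ⟨u', d⟩ :: x₂ = ⟨v, a⟩ :: w₂ := hE2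
          obtain ⟨hQ, hx₂⟩ := List.cons_eq_cons.mp hE2
          refine ⟨x₁, ⟨u, c⟩ :: x₂, by rw [hQ], ?_, ?_⟩
          · rw [hw₁, ← hM, ← hx₂] at hrel
            simpa using hrel
          · intro p hp
            exact hadj p (by rw [hw₁]; exact mem_append_left _ hp)
        | cons t₁ t'' =>
          obtain ⟨hQ, hE3⟩ := List.cons_eq_cons.mp hE2
          refine ⟨x₁ ++ ⟨u', d⟩ :: ⟨u, c⟩ :: t'', w₂, ?_, ?_, ?_⟩
          · rw [hE3]; simp [append_assoc]
          · rw [hw₁] at hrel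
            have hrel' : SRel Γ G l (x₁ ++ ⟨u, c⟩ :: ⟨u', d⟩ :: (t'' ++ w₂)) := by
              simpa [← hM, ← hQ, append_assoc] using hrel
            refine Relation.ReflTransGen.tail hrel' ?_
            have := Shuffle.swap x₁ (t'' ++ w₂) c d huv
            simpa [append_assoc] using this
          · intro p hp
            apply hadj
            rw [hw₁]
            simp only [← hM, ← hQ, mem_append, mem_cons] at hp ⊢
            tauto
set_option linter.unusedSectionVars false
theorem front_unique {v : V} {b b' : G v} {m m' : List (Σ v, G v)}
    (h : SRel Γ G (⟨v, b⟩ :: m) (⟨v, b'⟩ :: m')) : b = b' ∧ SRel Γ G m m' := by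
  obtain ⟨w₁, w₂, hE, hrel, hadj⟩ := marker_invariant h
  cases w₁ with
  | nil =>
    obtain ⟨hM, ht⟩ := List.cons_eq_cons.mp hE
    obtain ⟨-, h2⟩ := Sigma.mk.inj_iff.mp hM
    rw [← ht] at hrel
    exact ⟨(eq_of_heq h2).symm, hrel⟩
  | cons p w₁' =>
    exfalso
    obtain ⟨hM, -⟩ := List.cons_eq_cons.mp hE
    have := hadj p mem_cons_self
    have h2 : v = p.fst := congrArg Sigma.fst hM
    rw [← h2] at this
    exact Γ.irrefl this
variable [∀ v, Group (G v)]

theorem shuffle_mem {l l' : List (Σ v, G v)} (h : Shuffle Γ G l l') (p : Σ v, G v) :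
    p ∈ l' ↔ p ∈ l := by
  obtain ⟨x₁, x₂, u, u', c, d, _, rfl, rfl⟩ := shuffle_iff.mp h
  simp only [mem_append, mem_cons]
  tauto

theorem reduced_of_rel {l l' : List (Σ v, G v)} (hl : Reduced Γ G l) (h : SRel Γ G l l') :
    Reduced Γ G l' := by
  refine ⟨?_, fun l'' h'' => hl.2 l'' (h.trans h'')⟩
  intro p hp
  apply hl.1
  clear hl
  induction h with
  | refl => exact hp
  | tail _ hs ih => exact ih ((shuffle_mem hs p).mp hp)

theorem reduced_tail {p : Σ v, G v} {l : List (Σ v, G v)} (h : Reduced Γ G (p :: l)) :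
    Reduced Γ G l := by
  refine ⟨fun q hq => h.1 q (mem_cons_of_mem p hq), fun l' hl' => ?_⟩
  exact (h.2 (p :: l') (SRel.cons' p hl')).tail

theorem srel_nil {l : List (Σ v, G v)} (h : SRel Γ G [] l) : l = [] := by
  induction h with
  | refl => rfl
  | tail _ hs ih =>
    subst ih
    obtain ⟨x₁, x₂, u, u', c, d, _, hE, -⟩ := shuffle_iff.mp hs
    exact absurd hE (by simp)

theorem reduced_nil : Reduced Γ G ([] : List (Σ v, G v)) :=
  ⟨by simp, fun l' h => by rw [srel_nil h]; exact List.IsChain.nil⟩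

theorem srel_singleton {x : Σ v, G v} {l : List (Σ v, G v)} (h : SRel Γ G [x] l) : l = [x] := by
  induction h with
  | refl => rfl
  | tail _ hs ih =>
    subst ih
    obtain ⟨x₁, x₂, u, u', c, d, _, hE, -⟩ := shuffle_iff.mp hs
    exfalso
    have := congrArg List.length hE
    simp at this
    omega

theorem reduced_singleton {x : Σ v, G v} (hx : x.2 ≠ 1) : Reduced Γ G [x] := by
  refine ⟨by simpa using hx, fun l' h => by rw [srel_singleton h]; exact List.IsChain.singleton _⟩

theorem not_frontTo_nil (v : V) : ¬ FrontTo Γ G v ([] : List (Σ v, G v)) := by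
  rintro ⟨b, m, h⟩
  exact absurd (srel_nil h) (by simp)

theorem frontTo_of_rel {v : V} {l l' : List (Σ v, G v)} (h : SRel Γ G l l')
    (hf : FrontTo Γ G v l') : FrontTo Γ G v l := by
  obtain ⟨b, m, hb⟩ := hf
  exact ⟨b, m, h.trans hb⟩

/-- If `u ≠ v` then fronting `u` in `⟨v,b⟩ :: l` implies fronting `u` in `l`. -/
theorem frontTo_cons_ne {u v : V} (huv : u ≠ v) {b : G v} {l : List (Σ v, G v)}
    (h : FrontTo Γ G u (⟨v, b⟩ :: l)) : FrontTo Γ G u l := by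
  obtain ⟨c, m, hc⟩ := h
  obtain ⟨w₁, w₂, hE, hrel, hadj⟩ := marker_invariant hc
  cases w₁ with
  | nil =>
    obtain ⟨hM, -⟩ := List.cons_eq_cons.mp hE
    exact absurd (congrArg Sigma.fst hM) huv
  | cons p w₁' =>
    obtain ⟨hM, -⟩ := List.cons_eq_cons.mp hE
    refine ⟨c, w₁' ++ w₂, ?_⟩
    rw [← hM] at hrel
    simpa using hrel

/-- In a reduced word, once a `v`-syllable is extracted, no further `v` can be fronted. -/
theorem not_frontTo_of_reduced {v : V} {b : G v} {l m : List (Σ v, G v)}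
    (hl : Reduced Γ G l) (h : SRel Γ G l (⟨v, b⟩ :: m)) : ¬ FrontTo Γ G v m := by
  rintro ⟨e, n, hn⟩
  have := hl.2 _ (h.trans (SRel.cons' _ hn))
  simp only [List.Chain', List.isChain_cons_cons] at this
  exact this.1 rfl

theorem head_ne_one_of_reduced {v : V} {b : G v} {l m : List (Σ v, G v)}
    (hl : Reduced Γ G l) (h : SRel Γ G l (⟨v, b⟩ :: m)) : b ≠ 1 :=
  (reduced_of_rel hl h).1 ⟨v, b⟩ mem_cons_self

/-- Chain' for the "distinct vertices" relation only depends on the vertex sequence. -/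
theorem chain'_fst_congr {l l' : List (Σ v, G v)}
    (h : l.map Sigma.fst = l'.map Sigma.fst)
    (hc : l.Chain' (fun p q => p.1 ≠ q.1)) : l'.Chain' (fun p q => p.1 ≠ q.1) := by
  simp only [List.Chain'] at hc ⊢; rw [← List.isChain_map (f := Sigma.fst) (R := Ne)] at hc ⊢
  · rwa [h] at hc

/-- Prepending a fresh nontrivial syllable to a reduced word stays reduced,
provided the vertex cannot be fronted. -/
theorem reduced_cons {v : V} {a : G v} {l : List (Σ v, G v)}
    (hl : Reduced Γ G l) (ha : a ≠ 1) (hf : ¬ FrontTo Γ G v l) :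
    Reduced Γ G (⟨v, a⟩ :: l) := by
  constructor
  · rintro p hp
    rcases mem_cons.mp hp with rfl | hp
    · exact ha
    · exact hl.1 p hp
  · intro w hw
    obtain ⟨w₁, w₂, rfl, hrel, hadj⟩ := marker_invariant hw
    have hc : (w₁ ++ w₂).Chain' (fun p q => p.1 ≠ q.1) := hl.2 _ hrel
    simp only [List.Chain', List.isChain_append] at hc
    simp only [List.Chain', List.isChain_append]
    refine ⟨hc.1, ?_, ?_⟩
    · rw [List.isChain_cons]
      refine ⟨?_, hc.2.1⟩
      intro q hq
      cases w₂ with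
      | nil => simp at hq
      | cons q₀ w₂' =>
        simp only [head?_cons, Option.mem_some_iff] at hq
        subst hq
        intro hvq
        obtain ⟨u, e⟩ := q₀
        simp only at hvq
        subst hvq
        exact hf ⟨e, w₁ ++ w₂', hrel.trans (SRel.front e w₁ w₂' hadj)⟩
    · intro x hx q hq
      simp only [head?_cons, Option.mem_some_iff] at hq
      subst hq
      have hxm : x ∈ w₁ := List.mem_of_mem_getLast? hx
      exact (hadj x hxm).ne

/-- Replacing the head syllable's group element (same vertex, nontrivial) keeps reducedness. -/
theorem reduced_replace_head {v : V} {b c : G v} {m : List (Σ v, G v)}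
    (h : Reduced Γ G (⟨v, b⟩ :: m)) (hc : c ≠ 1) : Reduced Γ G (⟨v, c⟩ :: m) := by
  constructor
  · rintro p hp
    rcases mem_cons.mp hp with rfl | hp
    · exact hc
    · exact h.1 p (mem_cons_of_mem _ hp)
  · intro w hw
    obtain ⟨w₁, w₂, rfl, hrel, hadj⟩ := marker_invariant hw
    have h2 : SRel Γ G (⟨v, b⟩ :: m) (w₁ ++ ⟨v, b⟩ :: w₂) :=
      (SRel.cons' _ hrel).trans (SRel.front b w₁ w₂ hadj).symm'
    have hch := h.2 _ h2
    refine chain'_fst_congr (l := w₁ ++ ⟨v, b⟩ :: w₂) (by simp) hch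

theorem of_comm {u v : V} (h : Γ.Adj u v) (a : G u) (b : G v) :
    GraphProduct.of Γ G a * GraphProduct.of Γ G b =
      GraphProduct.of Γ G b * GraphProduct.of Γ G a := by
  have hmem : (Monoid.CoprodI.of a * Monoid.CoprodI.of b *
      (Monoid.CoprodI.of a)⁻¹ * (Monoid.CoprodI.of b)⁻¹) ∈ graphProductRels Γ G :=
    Subgroup.subset_normalClosure ⟨u, v, a, b, h, rfl⟩
  have h1 : (QuotientGroup.mk' (graphProductRels Γ G))
      (Monoid.CoprodI.of a * Monoid.CoprodI.of b *
        (Monoid.CoprodI.of a)⁻¹ * (Monoid.CoprodI.of b)⁻¹) = 1 := by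
    rw [QuotientGroup.mk'_apply, QuotientGroup.eq_one_iff]
    exact hmem
  simp only [map_mul, map_inv] at h1
  have h2 : Commute (GraphProduct.of Γ G a) (GraphProduct.of Γ G b) :=
    commutatorElement_eq_one_iff_commute.mp (by rw [commutatorElement_def]; exact h1)
  exact h2.eq

theorem wordProd_nil : wordProd Γ G [] = 1 := rfl

theorem wordProd_cons (p : Σ v, G v) (l : List (Σ v, G v)) :
    wordProd Γ G (p :: l) = GraphProduct.of Γ G p.2 * wordProd Γ G l := by
  simp [wordProd]

theorem wordProd_append (l₁ l₂ : List (Σ v, G v)) :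
    wordProd Γ G (l₁ ++ l₂) = wordProd Γ G l₁ * wordProd Γ G l₂ := by
  simp [wordProd]

theorem wordProd_shuffle {l l' : List (Σ v, G v)} (hs : Shuffle Γ G l l') :
    wordProd Γ G l = wordProd Γ G l' := by
  obtain ⟨x₁, x₂, u, u', c, d, h, rfl, rfl⟩ := shuffle_iff.mp hs
  simp only [wordProd, map_append, prod_append, map_cons, prod_cons]
  congr 1
  rw [← mul_assoc, ← mul_assoc, of_comm h]

theorem wordProd_rel {l l' : List (Σ v, G v)} (hs : SRel Γ G l l') :
    wordProd Γ G l = wordProd Γ G l' := by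
  induction hs with
  | refl => rfl
  | tail _ h ih => exact ih.trans (wordProd_shuffle h)

/-- Reduced words. -/
abbrev RWord (Γ : SimpleGraph V) (G : V → Type*) [∀ v, Group (G v)] :=
  {l : List (Σ v, G v) // Reduced Γ G l}

instance rwSetoid (Γ : SimpleGraph V) (G : V → Type*) [∀ v, Group (G v)] :
    Setoid (RWord Γ G) :=
  ⟨fun l l' => SRel Γ G l.1 l'.1,
   fun _ => SRel.rfl', fun h => h.symm', fun h h' => h.trans' h'⟩

/-- Normal forms: reduced words up to shuffling. -/
abbrev NF (Γ : SimpleGraph V) (G : V → Type*) [∀ v, Group (G v)] := Quotient (rwSetoid Γ G)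

noncomputable def frB {v : V} {l : List (Σ v, G v)} (h : FrontTo Γ G v l) : G v := h.choose

noncomputable def frM {v : V} {l : List (Σ v, G v)} (h : FrontTo Γ G v l) :
    List (Σ v, G v) := h.choose_spec.choose

theorem fr_spec {v : V} {l : List (Σ v, G v)} (h : FrontTo Γ G v l) :
    SRel Γ G l (⟨v, frB h⟩ :: frM h) := h.choose_spec.choose_spec

theorem fr_eq {v : V} {l : List (Σ v, G v)} (h : FrontTo Γ G v l) {b : G v}
    {m : List (Σ v, G v)} (hr : SRel Γ G l (⟨v, b⟩ :: m)) :
    frB h = b ∧ SRel Γ G (frM h) m :=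
  front_unique ((fr_spec h).symm'.trans hr)

open scoped Classical in
/-- The action of a syllable on reduced words. -/
noncomputable def actR (v : V) (a : G v) (l : RWord Γ G) : RWord Γ G :=
  if ha : a = 1 then l
  else if h : FrontTo Γ G v l.1 then
    if hab : a * frB h = 1 then
      ⟨frM h, reduced_tail (reduced_of_rel l.2 (fr_spec h))⟩
    else
      ⟨⟨v, a * frB h⟩ :: frM h, reduced_replace_head (reduced_of_rel l.2 (fr_spec h)) hab⟩
  else ⟨⟨v, a⟩ :: l.1, reduced_cons l.2 ha h⟩

theorem actR_one (v : V) (l : RWord Γ G) : actR v (1 : G v) l = l := by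
  unfold actR
  rw [dif_pos rfl]

theorem actR_not_front {v : V} {a : G v} {l : RWord Γ G} (ha : a ≠ 1)
    (h : ¬ FrontTo Γ G v l.1) :
    actR v a l = ⟨⟨v, a⟩ :: l.1, reduced_cons l.2 ha h⟩ := by
  rw [actR, dif_neg ha, dif_neg h]

theorem actR_front {v : V} {a b : G v} {l : RWord Γ G} {m : List (Σ v, G v)}
    (hr : SRel Γ G l.1 (⟨v, b⟩ :: m)) (hab : a * b ≠ 1) :
    SRel Γ G (actR v a l).1 (⟨v, a * b⟩ :: m) := by
  by_cases ha : a = 1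
  · subst ha
    rw [actR_one, one_mul]
    exact hr
  · have h : FrontTo Γ G v l.1 := ⟨b, m, hr⟩
    obtain ⟨hb, hm⟩ := fr_eq h hr
    rw [actR, dif_neg ha, dif_pos h]
    by_cases hab' : a * frB h = 1
    · rw [hb] at hab'; exact absurd hab' hab
    · rw [dif_neg hab']
      show SRel Γ G (⟨v, a * frB h⟩ :: frM h) (⟨v, a * b⟩ :: m)
      rw [hb]
      exact SRel.cons' _ hm

theorem actR_cancel {v : V} {a b : G v} {l : RWord Γ G} {m : List (Σ v, G v)}
    (hr : SRel Γ G l.1 (⟨v, b⟩ :: m)) (hab : a * b = 1) :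
    SRel Γ G (actR v a l).1 m := by
  have hb1 : b ≠ 1 := head_ne_one_of_reduced l.2 hr
  have ha : a ≠ 1 := fun h' => hb1 (by rwa [h', one_mul] at hab)
  have h : FrontTo Γ G v l.1 := ⟨b, m, hr⟩
  obtain ⟨hb, hm⟩ := fr_eq h hr
  rw [actR, dif_neg ha, dif_pos h, dif_pos (by rw [hb]; exact hab)]
  exact hm

theorem actR_rel (v : V) (a : G v) {l l' : RWord Γ G} (h : SRel Γ G l.1 l'.1) :
    SRel Γ G (actR v a l).1 (actR v a l').1 := by
  by_cases ha : a = 1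
  · subst ha; rw [actR_one, actR_one]; exact h
  · by_cases hf : FrontTo Γ G v l.1
    · obtain ⟨b, m, hr⟩ := hf
      have hr' : SRel Γ G l'.1 (⟨v, b⟩ :: m) := h.symm'.trans hr
      by_cases hab : a * b = 1
      · exact (actR_cancel hr hab).trans (actR_cancel hr' hab).symm'
      · exact (actR_front hr hab).trans (actR_front hr' hab).symm'
    · have hf' : ¬ FrontTo Γ G v l'.1 := fun hh => hf (frontTo_of_rel h hh)
      rw [actR_not_front ha hf, actR_not_front ha hf']
      exact SRel.cons' _ h

theorem actR_mul (v : V) (a a' : G v) (l : RWord Γ G) :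
    SRel Γ G (actR v (a * a') l).1 (actR v a (actR v a' l)).1 := by
  by_cases ha' : a' = 1
  · subst ha'; rw [mul_one, actR_one]
  by_cases ha : a = 1
  · subst ha; rw [one_mul, actR_one]
  by_cases hf : FrontTo Γ G v l.1
  · obtain ⟨b, m, hr⟩ := hf
    have hb1 : b ≠ 1 := head_ne_one_of_reduced l.2 hr
    have hnf : ¬ FrontTo Γ G v m := not_frontTo_of_reduced l.2 hr
    by_cases hab' : a' * b = 1
    · have h1 : SRel Γ G (actR v a' l).1 m := actR_cancel hr hab'
      have hnfi : ¬ FrontTo Γ G v (actR v a' l).1 :=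
        fun hh => hnf (frontTo_of_rel h1.symm' hh)
      rw [actR_not_front ha hnfi]
      by_cases haa : a * a' = 1
      · have hab2 : a = b := by
          rw [← one_mul b, ← haa, mul_assoc, hab', mul_one]
        rw [haa, actR_one]
        show SRel Γ G l.1 (⟨v, a⟩ :: (actR v a' l).1)
        rw [hab2]
        exact hr.trans (SRel.cons' _ h1.symm')
      · have h3 : (a * a') * b = a := by rw [mul_assoc, hab', mul_one]
        have h2 : SRel Γ G (actR v (a * a') l).1 (⟨v, (a * a') * b⟩ :: m) :=
          actR_front hr (by rw [h3]; exact ha)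
        rw [h3] at h2
        exact h2.trans (SRel.cons' _ h1.symm')
    · have h1 : SRel Γ G (actR v a' l).1 (⟨v, a' * b⟩ :: m) := actR_front hr hab'
      by_cases haa2 : a * (a' * b) = 1
      · have h2 : SRel Γ G (actR v a (actR v a' l)).1 m := actR_cancel h1 haa2
        have h3 : SRel Γ G (actR v (a * a') l).1 m :=
          actR_cancel hr (by rw [← mul_assoc] at haa2; exact haa2)
        exact h3.trans h2.symm'
      · have h2 : SRel Γ G (actR v a (actR v a' l)).1 (⟨v, a * (a' * b)⟩ :: m) :=
          actR_front h1 haa2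
        have h3 : SRel Γ G (actR v (a * a') l).1 (⟨v, (a * a') * b⟩ :: m) :=
          actR_front hr (by rw [mul_assoc]; exact haa2)
        rw [← mul_assoc] at h2
        exact h3.trans h2.symm'
  · rw [actR_not_front ha' hf]
    by_cases haa : a * a' = 1
    · have h2 : SRel Γ G (actR v a
          (⟨⟨v, a'⟩ :: l.1, reduced_cons l.2 ha' hf⟩ : RWord Γ G)).1 l.1 :=
        actR_cancel SRel.rfl' haa
      rw [haa, actR_one]
      exact h2.symm'
    · have h2 : SRel Γ G (actR v a
          (⟨⟨v, a'⟩ :: l.1, reduced_cons l.2 ha' hf⟩ : RWord Γ G)).1 (⟨v, a * a'⟩ :: l.1) :=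
        actR_front SRel.rfl' haa
      rw [actR_not_front haa hf]
      exact h2.symm'

theorem actR_comm_aux {u v : V} (h : Γ.Adj u v) {a : G u} {b : G v} (ha : a ≠ 1) (hb : b ≠ 1)
    (l : RWord Γ G) (hFv : FrontTo Γ G v l.1) (hFu : ¬ FrontTo Γ G u l.1) :
    SRel Γ G (actR u a (actR v b l)).1 (actR v b (actR u a l)).1 := by
  have huv : u ≠ v := h.ne
  obtain ⟨c, m, hr⟩ := hFv
  have hFum : ¬ FrontTo Γ G u m := by
    rintro ⟨d, n, hn⟩
    apply hFu
    refine ⟨d, ⟨v, c⟩ :: n, ?_⟩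
    refine (hr.trans (SRel.cons' _ hn)).trans (Relation.ReflTransGen.single ?_)
    simpa using Shuffle.swap ([] : List (Σ v, G v)) n c d h.symm
  rw [actR_not_front ha hFu]
  have hr2 : SRel Γ G (⟨u, a⟩ :: l.1) (⟨v, c⟩ :: ⟨u, a⟩ :: m) := by
    refine (SRel.cons' _ hr).trans (Relation.ReflTransGen.single ?_)
    simpa using Shuffle.swap ([] : List (Σ v, G v)) m a c h
  by_cases hbc : b * c = 1
  · have h1 : SRel Γ G (actR v b l).1 m := actR_cancel hr hbc
    have hFui : ¬ FrontTo Γ G u (actR v b l).1 := fun hh => hFum (frontTo_of_rel h1.symm' hh)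
    rw [actR_not_front ha hFui]
    have h2 : SRel Γ G (actR v b
        (⟨⟨u, a⟩ :: l.1, reduced_cons l.2 ha hFu⟩ : RWord Γ G)).1 (⟨u, a⟩ :: m) :=
      actR_cancel hr2 hbc
    exact (SRel.cons' _ h1).trans h2.symm'
  · have h1 : SRel Γ G (actR v b l).1 (⟨v, b * c⟩ :: m) := actR_front hr hbc
    have hFui : ¬ FrontTo Γ G u (actR v b l).1 := fun hh =>
      hFum (frontTo_cons_ne huv (frontTo_of_rel h1.symm' hh))
    rw [actR_not_front ha hFui]
    have h2 : SRel Γ G (actR v b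
        (⟨⟨u, a⟩ :: l.1, reduced_cons l.2 ha hFu⟩ : RWord Γ G)).1 (⟨v, b * c⟩ :: ⟨u, a⟩ :: m) :=
      actR_front hr2 hbc
    refine ((SRel.cons' _ h1).trans (Relation.ReflTransGen.single ?_)).trans h2.symm'
    simpa using Shuffle.swap ([] : List (Σ v, G v)) m a (b * c) h

theorem actR_comm {u v : V} (h : Γ.Adj u v) (a : G u) (b : G v) (l : RWord Γ G) :
    SRel Γ G (actR u a (actR v b l)).1 (actR v b (actR u a l)).1 := by
  have huv : u ≠ v := h.ne
  by_cases ha : a = 1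
  · subst ha; rw [actR_one, actR_one]
  by_cases hb : b = 1
  · subst hb; rw [actR_one, actR_one]
  by_cases hFv : FrontTo Γ G v l.1
  · by_cases hFu : FrontTo Γ G u l.1
    · -- both frontable
      obtain ⟨c, m, hr⟩ := hFv
      have hm : Reduced Γ G m := reduced_tail (reduced_of_rel l.2 hr)
      have hFum : FrontTo Γ G u m := frontTo_cons_ne huv (frontTo_of_rel hr.symm' hFu)
      obtain ⟨d, m2, hr3⟩ := hFum
      have R1 : SRel Γ G l.1 (⟨v, c⟩ :: ⟨u, d⟩ :: m2) := hr.trans (SRel.cons' _ hr3)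
      have R2 : SRel Γ G l.1 (⟨u, d⟩ :: ⟨v, c⟩ :: m2) :=
        R1.trans (Relation.ReflTransGen.single
          (by simpa using Shuffle.swap ([] : List (Σ v, G v)) m2 c d h.symm))
      by_cases hbc : b * c = 1
      · have h1 : SRel Γ G (actR v b l).1 (⟨u, d⟩ :: m2) :=
          (actR_cancel hr hbc).trans hr3
        by_cases had : a * d = 1
        · exact (actR_cancel h1 had).trans
            ((actR_cancel (actR_cancel R2 had) hbc).symm')
        · have hR1 : SRel Γ G (actR u a l).1 (⟨v, c⟩ :: ⟨u, a * d⟩ :: m2) := by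
            refine (actR_front R2 had).trans (Relation.ReflTransGen.single ?_)
            simpa using Shuffle.swap ([] : List (Σ v, G v)) m2 (a * d) c h
          exact (actR_front h1 had).trans ((actR_cancel hR1 hbc).symm')
      · have h1 : SRel Γ G (actR v b l).1 (⟨u, d⟩ :: ⟨v, b * c⟩ :: m2) := by
          refine ((actR_front hr hbc).trans (SRel.cons' _ hr3)).trans
            (Relation.ReflTransGen.single ?_)
          simpa using Shuffle.swap ([] : List (Σ v, G v)) m2 (b * c) d h.symm
        by_cases had : a * d = 1
        · have hR1 : SRel Γ G (actR u a l).1 (⟨v, c⟩ :: m2) := actR_cancel R2 had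
          exact (actR_cancel h1 had).trans ((actR_front hR1 hbc).symm')
        · have hR1 : SRel Γ G (actR u a l).1 (⟨v, c⟩ :: ⟨u, a * d⟩ :: m2) := by
            refine (actR_front R2 had).trans (Relation.ReflTransGen.single ?_)
            simpa using Shuffle.swap ([] : List (Σ v, G v)) m2 (a * d) c h
          refine ((actR_front h1 had).trans (Relation.ReflTransGen.single ?_)).trans
            ((actR_front hR1 hbc).symm')
          simpa using Shuffle.swap ([] : List (Σ v, G v)) m2 (a * d) (b * c) h
    · exact actR_comm_aux h ha hb l hFv hFu
  · by_cases hFu : FrontTo Γ G u l.1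
    · exact (actR_comm_aux h.symm hb ha l hFu hFv).symm'
    · rw [actR_not_front hb hFv, actR_not_front ha hFu]
      have hFu2 : ¬ FrontTo Γ G u (⟨v, b⟩ :: l.1) := fun hh => hFu (frontTo_cons_ne huv hh)
      have hFv2 : ¬ FrontTo Γ G v (⟨u, a⟩ :: l.1) := fun hh => hFv (frontTo_cons_ne huv.symm hh)
      rw [actR_not_front (l := ⟨⟨v, b⟩ :: l.1, reduced_cons l.2 hb hFv⟩) ha hFu2,
        actR_not_front (l := ⟨⟨u, a⟩ :: l.1, reduced_cons l.2 ha hFu⟩) hb hFv2]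
      exact Relation.ReflTransGen.single
        (by simpa using Shuffle.swap ([] : List (Σ v, G v)) l.1 a b h)

noncomputable def act (v : V) (a : G v) : NF Γ G → NF Γ G :=
  Quotient.map (actR v a) (fun _ _ h => actR_rel v a h)

theorem act_mk (v : V) (a : G v) (l : RWord Γ G) :
    act v a (Quotient.mk _ l) = Quotient.mk _ (actR v a l) := rfl

theorem act_one_apply (v : V) (x : NF Γ G) : act v (1 : G v) x = x := by
  induction x using Quotient.ind with
  | _ l => rw [act_mk, actR_one]

theorem act_mul_apply (v : V) (a a' : G v) (x : NF Γ G) :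
    act v (a * a') x = act v a (act v a' x) := by
  induction x using Quotient.ind with
  | _ l => exact Quotient.sound (actR_mul v a a' l)

theorem act_comm_apply {u v : V} (h : Γ.Adj u v) (a : G u) (b : G v) (x : NF Γ G) :
    act u a (act v b x) = act v b (act u a x) := by
  induction x using Quotient.ind with
  | _ l => exact Quotient.sound (actR_comm h a b l)

noncomputable def actE (v : V) (a : G v) : Equiv.Perm (NF Γ G) where
  toFun := act v a
  invFun := act v a⁻¹
  left_inv := fun x => by rw [← act_mul_apply, inv_mul_cancel, act_one_apply]
  right_inv := fun x => by rw [← act_mul_apply, mul_inv_cancel, act_one_apply]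

noncomputable def phiV (v : V) : G v →* Equiv.Perm (NF Γ G) where
  toFun a := actE v a
  map_one' := Equiv.ext fun x => act_one_apply v x
  map_mul' a a' := Equiv.ext fun x => act_mul_apply v a a' x

noncomputable def Phi : Monoid.CoprodI G →* Equiv.Perm (NF Γ G) :=
  Monoid.CoprodI.lift phiV

theorem Phi_rels : graphProductRels Γ G ≤ (Phi (Γ := Γ) (G := G)).ker := by
  apply Subgroup.normalClosure_le_normal
  rintro x ⟨u, v, a, b, hadj, rfl⟩
  rw [SetLike.mem_coe, MonoidHom.mem_ker]
  simp only [map_mul, map_inv, Phi, Monoid.CoprodI.lift_of]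
  have hc : phiV (Γ := Γ) u a * phiV v b = phiV v b * phiV u a :=
    Equiv.ext fun x => act_comm_apply hadj a b x
  rw [hc]
  group

noncomputable def Psi : GraphProduct Γ G →* Equiv.Perm (NF Γ G) :=
  QuotientGroup.lift _ Phi Phi_rels

theorem Psi_of (v : V) (a : G v) :
    Psi (GraphProduct.of Γ G a) = phiV (Γ := Γ) v a := by
  show QuotientGroup.lift _ Phi _ ((Monoid.CoprodI.of a : Monoid.CoprodI G) :
      Monoid.CoprodI G ⧸ graphProductRels Γ G) = phiV v a
  rw [QuotientGroup.lift_mk]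
  exact Monoid.CoprodI.lift_of phiV a

theorem Psi_wordProd {l : List (Σ v, G v)} (hl : Reduced Γ G l) :
    Psi (wordProd Γ G l) (Quotient.mk _ (⟨[], reduced_nil⟩ : RWord Γ G)) =
      Quotient.mk _ (⟨l, hl⟩ : RWord Γ G) := by
  induction l with
  | nil => rw [wordProd_nil, map_one]; rfl
  | cons p l ih =>
    have hl' : Reduced Γ G l := reduced_tail hl
    have hp1 : p.2 ≠ 1 := hl.1 p mem_cons_self
    have hfp : ¬ FrontTo Γ G p.1 l := by
      rintro ⟨b, m, hb⟩
      have := hl.2 _ (SRel.cons' p hb)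
      simp only [List.Chain', List.isChain_cons_cons] at this
      exact this.1 rfl
    rw [wordProd_cons, map_mul, Equiv.Perm.mul_apply, ih hl', Psi_of]
    show act p.1 p.2 (Quotient.mk _ (⟨l, hl'⟩ : RWord Γ G)) = _
    rw [act_mk]
    apply Quotient.sound
    show SRel Γ G (actR p.1 p.2 ⟨l, hl'⟩).1 (p :: l)
    rw [actR_not_front hp1 hfp]

theorem exists_reduced_mul {l : List (Σ v, G v)} (hl : Reduced Γ G l) (v : V) (a : G v) :
    ∃ m, Reduced Γ G m ∧ wordProd Γ G m = GraphProduct.of Γ G a * wordProd Γ G l := by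
  by_cases ha : a = 1
  · exact ⟨l, hl, by rw [ha, map_one, one_mul]⟩
  by_cases hf : FrontTo Γ G v l
  · obtain ⟨b, m, hr⟩ := hf
    have hred : Reduced Γ G (⟨v, b⟩ :: m) := reduced_of_rel hl hr
    have hwl : wordProd Γ G l = GraphProduct.of Γ G b * wordProd Γ G m := by
      rw [wordProd_rel hr, wordProd_cons]
    by_cases hab : a * b = 1
    · refine ⟨m, reduced_tail hred, ?_⟩
      rw [hwl, ← mul_assoc, ← map_mul, hab, map_one, one_mul]
    · refine ⟨⟨v, a * b⟩ :: m, reduced_replace_head hred hab, ?_⟩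
      rw [wordProd_cons, hwl, ← mul_assoc, ← map_mul]
  · exact ⟨⟨v, a⟩ :: l, reduced_cons hl ha hf, by rw [wordProd_cons]⟩

theorem exists_reduced_list (L : List (Σ v, G v)) :
    ∃ l, Reduced Γ G l ∧ wordProd Γ G l = wordProd Γ G L := by
  induction L with
  | nil => exact ⟨[], reduced_nil, rfl⟩
  | cons p L ih =>
    obtain ⟨l, hl, he⟩ := ih
    obtain ⟨m, hm, he2⟩ := exists_reduced_mul hl p.1 p.2
    exact ⟨m, hm, by rw [he2, he, ← wordProd_cons]⟩

theorem exists_word (g : GraphProduct Γ G) : ∃ L, wordProd Γ G L = g := by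
  obtain ⟨x, rfl⟩ := QuotientGroup.mk'_surjective (graphProductRels Γ G) g
  induction x using Monoid.CoprodI.induction_on with
  | one => exact ⟨[], by rw [map_one]; rfl⟩
  | of i m => exact ⟨[⟨i, m⟩], by rw [wordProd_cons, wordProd_nil, mul_one]; rfl⟩
  | mul x y ihx ihy =>
    obtain ⟨Lx, hx⟩ := ihx
    obtain ⟨Ly, hy⟩ := ihy
    exact ⟨Lx ++ Ly, by rw [wordProd_append, hx, hy, map_mul]; rfl⟩

end GPNF

/-- Normal Form Theorem for graph products: every nontrivial element is represented
by a reduced word, unique up to syllable shuffling. -/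
theorem stmt_9 {V : Type*} (Γ : SimpleGraph V) (G : V → Type*) [∀ v, Group (G v)]
    (g : GraphProduct Γ G) (hg : g ≠ 1) :
    (∃ l, Reduced Γ G l ∧ wordProd Γ G l = g) ∧
    (∀ l₁ l₂, Reduced Γ G l₁ → Reduced Γ G l₂ →
      wordProd Γ G l₁ = g → wordProd Γ G l₂ = g →
      Relation.ReflTransGen (Shuffle Γ G) l₁ l₂) := by
  constructor
  · obtain ⟨L, hL⟩ := GPNF.exists_word g
    obtain ⟨l, hl, he⟩ := GPNF.exists_reduced_list L
    exact ⟨l, hl, he.trans hL⟩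
  · intro l₁ l₂ h₁ h₂ e₁ e₂
    have hq : Quotient.mk (GPNF.rwSetoid Γ G) (⟨l₁, h₁⟩ : GPNF.RWord Γ G) =
        Quotient.mk (GPNF.rwSetoid Γ G) (⟨l₂, h₂⟩ : GPNF.RWord Γ G) := by
      rw [← GPNF.Psi_wordProd h₁, ← GPNF.Psi_wordProd h₂, e₁, e₂]
    exact Quotient.exact hq
end

section
/- The free products G = Z/4 * S_3 and H = (Z/2 × Z/2) * Z/6 are non-isomorphic groups, yet their Cayley graphs Cay(G, S_1) and Cay(H, S_2) are isomorphic, where S_1 = (Z/4 \ {e}) ∪ (S_3 \ {e}) and S_2 = ((Z/2 × Z/2) \ {e}) ∪ (Z/6 \ {e}). -/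
set_option linter.unusedSectionVars false


open Monoid Monoid.CoprodI Monoid.CoprodI.Word



def homSubtype (M N : Type*) [Monoid M] [Monoid N] :
    (M →* N) ≃ {f : M → N // f 1 = 1 ∧ ∀ a b, f (a * b) = f a * f b} where
  toFun f := ⟨f, f.map_one, f.map_mul⟩
  invFun f := { toFun := f.1, map_one' := f.2.1, map_mul' := f.2.2 }
  left_inv _ := rfl
  right_inv _ := rfl

abbrev C2 := Multiplicative (ZMod 2)

instance homFinite (M : Type*) [Monoid M] [Finite M] : Finite (M →* C2) :=
  Finite.of_injective _ (homSubtype M C2).injective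

theorem cardHom (M : Type*) [Monoid M] [Fintype M] [DecidableEq M] :
    Nat.card (M →* C2) =
      Fintype.card {f : M → C2 // f 1 = 1 ∧ ∀ a b, f (a * b) = f a * f b} := by
  rw [Nat.card_congr (homSubtype M C2), Nat.card_eq_fintype_card]

theorem card1 : Nat.card (Multiplicative (ZMod 4) →* C2) = 2 := by
  rw [cardHom]; decide

theorem card3 : Nat.card ((Multiplicative (ZMod 2) × Multiplicative (ZMod 2)) →* C2) = 4 := by
  rw [cardHom]; decide

theorem card4 : Nat.card (Multiplicative (ZMod 6) →* C2) = 2 := by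
  rw [cardHom]; decide

theorem hom_swap_eq (f : Equiv.Perm (Fin 3) →* C2) {x y : Fin 3} (hxy : x ≠ y) :
    f (Equiv.swap x y) = f (Equiv.swap 0 1) := by
  set τ : Equiv.Perm (Fin 3) := Equiv.swap 0 x with hτ
  have hτy : τ y ≠ 0 := by
    intro h
    apply hxy
    have : τ y = τ x := by rw [h, hτ, Equiv.swap_apply_right]
    exact (τ.injective this).symm
  set σ : Equiv.Perm (Fin 3) := τ * Equiv.swap 1 (τ y) with hσ
  have hσ0 : σ 0 = x := by
    rw [hσ, Equiv.Perm.mul_apply, Equiv.swap_apply_of_ne_of_ne (by decide) (Ne.symm hτy),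
      hτ, Equiv.swap_apply_left]
  have hσ1 : σ 1 = y := by
    rw [hσ, Equiv.Perm.mul_apply, Equiv.swap_apply_left, hτ, Equiv.swap_apply_self]
  have : Equiv.swap x y = σ * Equiv.swap 0 1 * σ⁻¹ := by
    rw [← hσ0, ← hσ1, Equiv.swap_apply_apply]
  rw [this, map_mul, map_mul, map_inv, mul_comm, inv_mul_cancel_left]

theorem card2 : Nat.card (Equiv.Perm (Fin 3) →* C2) ≤ 2 := by
  have : Nat.card (Equiv.Perm (Fin 3) →* C2) ≤ Nat.card C2 :=
    Nat.card_le_card_of_injective (fun f => f (Equiv.swap 0 1)) (by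
      intro f g hfg
      ext p
      have hp : p ∈ Subgroup.closure { σ : Equiv.Perm (Fin 3) | σ.IsSwap } := by
        rw [Equiv.Perm.closure_isSwap]; trivial
      refine MonoidHom.eqOn_closure (f := f) (g := g) ?_ hp
      rintro s ⟨x, y, hxy, rfl⟩
      rw [hom_swap_eq f hxy, hom_swap_eq g hxy]
      exact hfg)
  simpa using this

theorem part1 : IsEmpty (Monoid.Coprod (Multiplicative (ZMod 4)) (Equiv.Perm (Fin 3)) ≃*
      Monoid.Coprod (Multiplicative (ZMod 2) × Multiplicative (ZMod 2))
        (Multiplicative (ZMod 6))) := by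
  constructor
  intro e
  have hcong : Nat.card (Monoid.Coprod (Multiplicative (ZMod 4)) (Equiv.Perm (Fin 3)) →* C2) =
      Nat.card (Monoid.Coprod (Multiplicative (ZMod 2) × Multiplicative (ZMod 2))
        (Multiplicative (ZMod 6)) →* C2) :=
    Nat.card_congr
      { toFun := fun f => f.comp e.symm.toMonoidHom
        invFun := fun f => f.comp e.toMonoidHom
        left_inv := fun f => MonoidHom.ext fun x => by simp
        right_inv := fun f => MonoidHom.ext fun x => by simp }
  rw [Nat.card_congr Monoid.Coprod.liftEquiv.symm, Nat.card_congr Monoid.Coprod.liftEquiv.symm,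
    Nat.card_prod, Nat.card_prod, card1, card3, card4] at hcong
  have h2 := card2
  omega

namespace Stmt17

variable {ι : Type*} {G N : ι → Type*} [∀ i, Group (G i)] [∀ i, Group (N i)]
  [DecidableEq ι] [∀ i, DecidableEq (G i)] [∀ i, DecidableEq (N i)]
  (α : ∀ i, G i ≃ N i) (hα : ∀ i, α i 1 = 1)

include hα

theorem ne_one_map {i : ι} {m : G i} (hm : m ≠ 1) : α i m ≠ 1 := fun h =>
  hm ((α i).injective (h.trans (hα i).symm))

/-- Map a reduced word letterwise. -/
def wordMapFun (w : Word G) : Word N where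
  toList := w.toList.map fun l => ⟨l.1, α l.1 l.2⟩
  ne_one := by
    intro l hl
    simp only [List.mem_map] at hl
    obtain ⟨l', hl', rfl⟩ := hl
    exact ne_one_map α hα (w.ne_one l' hl')
  chain_ne := by
    rw [List.isChain_map]
    exact w.chain_ne

theorem fstIdx_wordMapFun (w : Word G) : fstIdx (wordMapFun α hα w) = fstIdx w := by
  simp only [fstIdx, wordMapFun, List.head?_map, Option.map_map]
  rfl

theorem wordMapFun_comp (β : ∀ i, N i ≃ G i) (hβ : ∀ i, β i 1 = 1)
    (hc : ∀ i x, β i (α i x) = x) (w : Word G) :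
    wordMapFun β hβ (wordMapFun α hα w) = w := by
  ext1
  simp only [wordMapFun, List.map_map]
  conv_rhs => rw [← List.map_id w.toList]
  refine List.map_congr_left fun l _ => ?_
  simp [Function.comp, hc]

/-- The letterwise equivalence on reduced words. -/
def wordMap : Word G ≃ Word N where
  toFun := wordMapFun α hα
  invFun := wordMapFun (fun i => (α i).symm)
    (fun i => by rw [← hα i, Equiv.symm_apply_apply])
  left_inv w := wordMapFun_comp α hα _ _ (fun i x => (α i).symm_apply_apply x) w
  right_inv w := wordMapFun_comp (fun i => (α i).symm)
    (fun i => by rw [← hα i, Equiv.symm_apply_apply]) α hα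
    (fun i x => (α i).apply_symm_apply x) w

theorem wordMap_rcons (i : ι) (p : Pair G i) :
    wordMap α hα (rcons p) = rcons ⟨α i p.head, wordMap α hα p.tail,
      by rw [show ((wordMap α hα p.tail : Word N)) = wordMapFun α hα p.tail from rfl,
        fstIdx_wordMapFun]; exact p.fstIdx_ne⟩ := by
  rcases p with ⟨m, t, ht⟩
  show wordMapFun α hα _ = _
  by_cases hm : m = 1
  · subst hm
    rw [rcons, dif_pos rfl, rcons, dif_pos (hα i)]
    rfl
  · rw [rcons, dif_neg hm, rcons, dif_neg (ne_one_map α hα hm)]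
    ext1
    simp [wordMapFun, cons, wordMap]

theorem equivPair_wordMap (i : ι) (w : Word G) :
    equivPair i (wordMap α hα w) = ⟨α i (equivPair i w).head, wordMap α hα (equivPair i w).tail,
      by
        rw [show ((wordMap α hα (equivPair i w).tail : Word N)) =
          wordMapFun α hα (equivPair i w).tail from rfl, fstIdx_wordMapFun]
        exact (equivPair i w).fstIdx_ne⟩ := by
  rw [Equiv.apply_eq_iff_eq_symm_apply, equivPair_symm, ← wordMap_rcons α hα i (equivPair i w)]
  rw [← equivPair_symm, Equiv.symm_apply_apply]

/-- The induced bijection on the free products. -/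
def mapEquiv : CoprodI G ≃ CoprodI N :=
  Word.equiv.trans ((wordMap α hα).trans Word.equiv.symm)

omit hα in
theorem exists_left_mul_iff_tail_eq (i : ι) (g h : CoprodI G) :
    (∃ m : G i, h = of m * g) ↔
      (equivPair i (Word.equiv h)).tail = (equivPair i (Word.equiv g)).tail := by
  constructor
  · rintro ⟨m, rfl⟩
    have : Word.equiv (of m * g) = of m • Word.equiv g := by
      show (of m * g) • Word.empty = of m • (g • (Word.empty : Word G))
      rw [mul_smul]
    rw [this, equivPair_smul_same]
  · intro htail
    refine ⟨(equivPair i (Word.equiv h)).head * ((equivPair i (Word.equiv g)).head)⁻¹, ?_⟩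
    have key : ∀ x : CoprodI G, x = of (equivPair i (Word.equiv x)).head *
        prod (equivPair i (Word.equiv x)).tail := by
      intro x
      conv_lhs => rw [← Word.equiv.symm_apply_apply x]
      conv_lhs => rw [show Word.equiv.symm (Word.equiv x) = prod (Word.equiv x) from rfl,
        ← equivPair_head_smul_equivPair_tail (i := i) (Word.equiv x), prod_smul]
    have keyh := key h
    have keyg := key g
    calc h = of (equivPair i (Word.equiv h)).head * prod (equivPair i (Word.equiv h)).tail := keyh
      _ = of ((equivPair i (Word.equiv h)).head * ((equivPair i (Word.equiv g)).head)⁻¹) *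
          (of (equivPair i (Word.equiv g)).head * prod (equivPair i (Word.equiv g)).tail) := by
            rw [htail, map_mul, map_inv]
            group
      _ = _ := by rw [← keyg]

theorem exists_left_mul_iff (i : ι) (g h : CoprodI G) :
    (∃ m : G i, h = of m * g) ↔
      (∃ m : N i, mapEquiv α hα h = of m * mapEquiv α hα g) := by
  rw [exists_left_mul_iff_tail_eq (G := G), exists_left_mul_iff_tail_eq (G := N)]
  have hw : ∀ x : CoprodI G, Word.equiv (mapEquiv α hα x) = wordMap α hα (Word.equiv x) := by
    intro x
    show Word.equiv (Word.equiv.symm (wordMap α hα (Word.equiv x))) = _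
    rw [Equiv.apply_symm_apply]
  rw [hw, hw, equivPair_wordMap, equivPair_wordMap]
  dsimp only
  exact ⟨fun hh => by rw [hh], fun hh => (wordMap α hα).injective hh⟩

omit hα in
theorem adj_iff (a b : CoprodI G) :
    (cayley (CoprodI G) (⋃ i, of '' {x : G i | x ≠ 1})).Adj a b ↔
      a ≠ b ∧ ∃ (i : ι) (m : G i), b = a * of m := by
  rw [cayley, SimpleGraph.fromRel_adj]
  refine and_congr_right fun hab => ?_
  constructor
  · rintro (hs | hs) <;>
      (simp only [Set.mem_iUnion, Set.mem_image, Set.mem_setOf_eq] at hs;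
       obtain ⟨i, m, _, hm⟩ := hs)
    · exact ⟨i, m, by rw [hm]; group⟩
    · refine ⟨i, m⁻¹, ?_⟩
      rw [map_inv, eq_comm, hm]
      group
  · rintro ⟨i, m, rfl⟩
    left
    have hm : m ≠ 1 := by
      rintro rfl
      simp at hab
    simp only [Set.mem_iUnion, Set.mem_image, Set.mem_setOf_eq]
    exact ⟨i, m, hm, by group⟩

omit hα in
theorem ex_mul_inv {K : ι → Type*} [∀ i, Group (K i)] (i : ι) (x y : CoprodI K) :
    (∃ m : K i, y = x * of m) ↔ ∃ m : K i, y⁻¹ = of m * x⁻¹ := by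
  constructor
  · rintro ⟨m, rfl⟩
    exact ⟨m⁻¹, by rw [map_inv]; group⟩
  · rintro ⟨m, hm⟩
    refine ⟨m⁻¹, ?_⟩
    rw [map_inv, ← inv_inv y, hm]
    group

/-- The graph isomorphism between the Cayley graphs of two free products with
pointwise-bijective factors. -/
def cayleyIso : cayley (CoprodI G) (⋃ i, of '' {x : G i | x ≠ 1}) ≃g
    cayley (CoprodI N) (⋃ i, of '' {x : N i | x ≠ 1}) where
  toEquiv := (Equiv.inv (CoprodI G)).trans ((mapEquiv α hα).trans (Equiv.inv (CoprodI N)))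
  map_rel_iff' := by
    intro a b
    simp only [Equiv.trans_apply, Equiv.inv_apply]
    rw [adj_iff, adj_iff]
    apply and_congr
    · exact not_congr ⟨fun hh => inv_injective ((mapEquiv α hα).injective (inv_injective hh)),
        fun hh => by rw [hh]⟩
    · refine exists_congr fun i => ?_
      rw [ex_mul_inv (K := N) i, inv_inv, inv_inv, ← exists_left_mul_iff α hα i,
        ← ex_mul_inv (K := G) i]

end Stmt17

namespace Stmt17

/-- Transfer a Cayley graph along a group isomorphism. -/
def cayleyMulEquiv {G H : Type*} [Group G] [Group H] (e : G ≃* H) (S : Set G) :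
    cayley G S ≃g cayley H (e '' S) where
  toEquiv := e.toEquiv
  map_rel_iff' := by
    intro a b
    show (cayley H (e '' S)).Adj (e a) (e b) ↔ (cayley G S).Adj a b
    rw [cayley, cayley, SimpleGraph.fromRel_adj, SimpleGraph.fromRel_adj]
    rw [show (e a)⁻¹ * e b = e (a⁻¹ * b) by rw [map_mul, map_inv],
      show (e b)⁻¹ * e a = e (b⁻¹ * a) by rw [map_mul, map_inv],
      e.injective.mem_set_image, e.injective.mem_set_image, e.injective.ne_iff]

universe u

/-- The two-element family of groups. -/
abbrev Fam (A B : Type u) : Bool → Type u := fun b => bif b then B else A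

variable (A B : Type u) [Group A] [Group B]

instance famGroup : ∀ b, Group (Fam A B b) := fun b =>
  Bool.rec (motive := fun b => Group (Fam A B b)) ‹Group A› ‹Group B› b

instance famDecEq [DecidableEq A] [DecidableEq B] : ∀ b, DecidableEq (Fam A B b) := fun b =>
  Bool.rec (motive := fun b => DecidableEq (Fam A B b)) ‹DecidableEq A› ‹DecidableEq B› b

/-- The binary coproduct is the indexed coproduct over `Bool`. -/
def coprodEquivCoprodI : Monoid.Coprod A B ≃* CoprodI (Fam A B) :=
  MonoidHom.toMulEquiv
    (Monoid.Coprod.lift (CoprodI.of (M := Fam A B) (i := false))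
      (CoprodI.of (M := Fam A B) (i := true)))
    (CoprodI.lift (fun b => Bool.rec
      (motive := fun b => Fam A B b →* Monoid.Coprod A B) Monoid.Coprod.inl Monoid.Coprod.inr b))
    (by
      apply Monoid.Coprod.hom_ext <;> ext x <;>
        simp [Monoid.Coprod.lift_apply_inl, Monoid.Coprod.lift_apply_inr, CoprodI.lift_of] <;>
        rfl)
    (by
      apply CoprodI.ext_hom
      intro i
      cases i <;> ext x <;> rw [MonoidHom.comp_apply, MonoidHom.comp_apply, CoprodI.lift_of] <;>
        exact congrArg _ rfl)

theorem coprodEquivCoprodI_inl (a : A) :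
    coprodEquivCoprodI A B (Monoid.Coprod.inl a) = CoprodI.of (M := Fam A B) (i := false) a := by
  simp [coprodEquivCoprodI, MonoidHom.toMulEquiv, Monoid.Coprod.lift_apply_inl]

theorem coprodEquivCoprodI_inr (b : B) :
    coprodEquivCoprodI A B (Monoid.Coprod.inr b) = CoprodI.of (M := Fam A B) (i := true) b := by
  simp [coprodEquivCoprodI, MonoidHom.toMulEquiv, Monoid.Coprod.lift_apply_inr]

theorem image_S :
    (coprodEquivCoprodI A B) '' ((Monoid.Coprod.inl '' {x : A | x ≠ 1}) ∪
        (Monoid.Coprod.inr '' {x : B | x ≠ 1})) =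
      ⋃ i, CoprodI.of '' {x : Fam A B i | x ≠ 1} := by
  rw [Set.image_union, ← Set.image_comp, ← Set.image_comp]
  ext x
  simp only [Set.mem_union, Set.mem_iUnion, Set.mem_image, Function.comp_apply,
    coprodEquivCoprodI_inl, coprodEquivCoprodI_inr, Set.mem_setOf_eq]
  constructor
  · rintro (⟨a, ha, rfl⟩ | ⟨b, hb, rfl⟩)
    · exact ⟨false, a, ha, rfl⟩
    · exact ⟨true, b, hb, rfl⟩
  · rintro ⟨(_ | _), m, hm, rfl⟩
    · exact Or.inl ⟨m, hm, rfl⟩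
    · exact Or.inr ⟨m, hm, rfl⟩

end Stmt17

namespace Stmt17

local notation "A" => Multiplicative (ZMod 4)
local notation "B" => Equiv.Perm (Fin 3)
local notation "A'" => Multiplicative (ZMod 2) × Multiplicative (ZMod 2)
local notation "B'" => Multiplicative (ZMod 6)

theorem cardA : Fintype.card A = Fintype.card A' := by decide

theorem cardB : Fintype.card B = Fintype.card B' := by
  simp [Fintype.card_perm]
  decide

noncomputable def α0 : A ≃ A' := Equiv.setValue (Fintype.equivOfCardEq cardA) 1 1

noncomputable def α1 : B ≃ B' := Equiv.setValue (Fintype.equivOfCardEq cardB) 1 1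

theorem hα0 : α0 1 = 1 := Equiv.setValue_eq _ _ _

theorem hα1 : α1 1 = 1 := Equiv.setValue_eq _ _ _

noncomputable def famEquiv : ∀ b, Fam A B b ≃ Fam A' B' b := fun b =>
  Bool.rec (motive := fun b => Fam A B b ≃ Fam A' B' b) α0 α1 b

theorem hfamEquiv : ∀ b, famEquiv b 1 = 1 := fun b =>
  Bool.rec (motive := fun b => famEquiv b 1 = 1) hα0 hα1 b

theorem part2 :
    Nonempty
      (cayley (Monoid.Coprod A B)
          ((Monoid.Coprod.inl '' {x : A | x ≠ 1}) ∪
           (Monoid.Coprod.inr '' {x : B | x ≠ 1}))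
        ≃g cayley (Monoid.Coprod A' B')
          ((Monoid.Coprod.inl '' {x : A' | x ≠ 1}) ∪
           (Monoid.Coprod.inr '' {x : B' | x ≠ 1}))) := by
  refine ⟨((cayleyMulEquiv (coprodEquivCoprodI A B) _).trans ?_).trans
    (cayleyMulEquiv (coprodEquivCoprodI A' B') _).symm⟩
  rw [image_S A B, image_S A' B']
  exact cayleyIso famEquiv hfamEquiv

end Stmt17


/-- The free products Z/4 * S₃ and (Z/2 × Z/2) * Z/6 are non-isomorphic groups,
yet their Cayley graphs with respect to all nontrivial elements of the free factors
are isomorphic. -/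
theorem stmt_17 :
    IsEmpty (Monoid.Coprod (Multiplicative (ZMod 4)) (Equiv.Perm (Fin 3)) ≃*
      Monoid.Coprod (Multiplicative (ZMod 2) × Multiplicative (ZMod 2))
        (Multiplicative (ZMod 6))) ∧
    Nonempty
      (cayley (Monoid.Coprod (Multiplicative (ZMod 4)) (Equiv.Perm (Fin 3)))
          ((Monoid.Coprod.inl '' {x : Multiplicative (ZMod 4) | x ≠ 1}) ∪
           (Monoid.Coprod.inr '' {x : Equiv.Perm (Fin 3) | x ≠ 1}))
        ≃g cayley (Monoid.Coprod (Multiplicative (ZMod 2) × Multiplicative (ZMod 2))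
            (Multiplicative (ZMod 6)))
          ((Monoid.Coprod.inl ''
              {x : Multiplicative (ZMod 2) × Multiplicative (ZMod 2) | x ≠ 1}) ∪
           (Monoid.Coprod.inr '' {x : Multiplicative (ZMod 6) | x ≠ 1}))) := by
  exact ⟨part1, Stmt17.part2⟩
end
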